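/- arXiv:2209.03339 — 5 statements merged into one kernel-verified Lean document; each statement's English description precedes it below -/
import Mathlib

section
/- Let ℓ, n ∈ ℕ, let 0 < p ≤ (2ℓ)^{-ℓ}, let H⃗ be an oriented graph with V(H) ⊂ [n], let 2 ≤ r ≤ ℓ, and suppose (A, H, B, X) is an r-frame. Then there exists a family 𝒞 of digraphs on vertex set A ∪ V(H) such that: (i) for every graph G with V(G) = A ∪ V(H) and every orientation G⃗ ∈ D_{r−1}(G) ∩ S_r(G, H⃗, B, X), there exists C⃗ ∈ 𝒞 such that every directed edge of G⃗ with one endpoint in A and the other in V(H) is an edge of C⃗; (ii) for every C⃗ ∈ 𝒞, at most ℓα² pairs {u,v} of vertices satisfy that both (u,v) and (v,u) are edges of C⃗; and (iii) |𝒞| ≤ exp(4 α p^{−1/ℓ} log n). -/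
open MeasureTheory Filter

/-- An orientation of a simple graph: each edge gets exactly one direction. -/
structure GraphOrientation {V : Type*} (G : SimpleGraph V) where
  dir : V → V → Prop
  dir_adj : ∀ ⦃u v⦄, dir u v → G.Adj u v
  total : ∀ ⦃u v⦄, G.Adj u v → dir u v ∨ dir v u
  asymm : ∀ ⦃u v⦄, dir u v → ¬ dir v u

namespace GraphOrientation

variable {V : Type*} {G : SimpleGraph V}

/-- There is a directed path of length `r` from `u` to `v` in `D` avoiding the set `X`
(this is the edge relation of the digraph `(D \ X)^r`). -/
def PathEdge (D : GraphOrientation G) (X : Set V) (r : ℕ) (u v : V) : Prop :=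
  ∃ c : Fin (r + 1) → V, Function.Injective c ∧ (∀ i, c i ∉ X) ∧
    c 0 = u ∧ c (Fin.last r) = v ∧
    ∀ i : Fin r, D.dir (c i.castSucc) (c i.succ)

/-- `D` contains a directed cycle of length `k`. -/
def HasDirCycle (D : GraphOrientation G) (k : ℕ) : Prop :=
  ∃ c : Fin k → V, Function.Injective c ∧
    ∀ i : Fin k, D.dir (c i) (c ⟨((i : ℕ) + 1) % k, Nat.mod_lt _ i.pos⟩)

/-- The number `e↔_{(D\X)^r}(A,B)` of edges between `A` and `B` (in either direction)
in the digraph `(D \ X)^r`. -/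
noncomputable def eBoth (D : GraphOrientation G) (X : Set V) (r : ℕ) (A B : Set V) : ℕ :=
  {q : V × V | q.1 ∈ A ∧ q.2 ∈ B ∧ D.PathEdge X r q.1 q.2}.ncard +
  {q : V × V | q.1 ∈ A ∧ q.2 ∈ B ∧ D.PathEdge X r q.2 q.1}.ncard

/-- The degree `d↔_{(D\X)^r}(a,B) = d⁺(a,B) + d⁻(a,B)` in the digraph `(D \ X)^r`. -/
noncomputable def dBoth (D : GraphOrientation G) (X : Set V) (r : ℕ) (a : V) (B : Set V) : ℕ :=
  {b ∈ B | D.PathEdge X r a b}.ncard + {b ∈ B | D.PathEdge X r b a}.ncard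

/-- `D` is `r`-locally dense w.r.t. edge probability `p`, parameter `ℓ`, vertex set `W`
and size parameter `a` (playing the role of `α = 2⁶ log n / p`). -/
def LocallyDense (D : GraphOrientation G) (W : Set V) (p : ℝ) (ℓ r : ℕ) (a : ℝ) : Prop :=
  ∀ A' B X : Set V, A' ⊆ W → B ⊆ W → X ⊆ W →
    Disjoint A' B → Disjoint A' X → Disjoint B X →
    (A'.ncard : ℝ) = a → (r : ℝ) * a ≤ B.ncard → (B.ncard : ℝ) ≤ (ℓ : ℝ) * a →
    (X.ncard : ℝ) ≤ ((ℓ : ℝ) + 1 - r) * a →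
    (1 / 2) * p ^ (((ℓ : ℝ) - r + 1) / ℓ) * A'.ncard * B.ncard ≤ (D.eBoth X r A' B : ℝ)

/-- `D` extends the orientation `Hd` of a subgraph. -/
def Extends (D : GraphOrientation G) {H : SimpleGraph V} (Hd : GraphOrientation H) : Prop :=
  ∀ ⦃u v⦄, Hd.dir u v → D.dir u v

end GraphOrientation

/-- The quantity `α = 2⁶ (log n) / p`. -/
noncomputable def alphaP (n : ℕ) (p : ℝ) : ℝ := 2 ^ 6 * Real.log n / p

/-- A Bernoulli-type measure on `Bool` with success probability `p`. -/
noncomputable def bern (p : ℝ) : Measure Bool :=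
  ENNReal.ofReal p • Measure.dirac true + ENNReal.ofReal (1 - p) • Measure.dirac false

instance bern.instIsFiniteMeasure (p : ℝ) : IsFiniteMeasure (bern p) := by
  constructor
  rw [bern]
  simp only [Measure.add_apply, Measure.smul_apply, smul_eq_mul]
  refine ENNReal.add_lt_top.2 ⟨?_, ?_⟩ <;>
    exact ENNReal.mul_lt_top ENNReal.ofReal_lt_top (measure_lt_top _ _)

/-- The product measure on edge-indicators modelling `G(n,p)`. -/
noncomputable def gnp (n : ℕ) (p : ℝ) : Measure (Sym2 (Fin n) → Bool) :=
  Measure.pi fun _ => bern p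

/-- The graph on `Fin n` determined by the edge indicators `ω`. -/
def graphOf {n : ℕ} (ω : Sym2 (Fin n) → Bool) : SimpleGraph (Fin n) where
  Adj u v := u ≠ v ∧ ω s(u, v) = true
  symm := by
    constructor
    intro u v h
    exact ⟨h.1.symm, by rw [Sym2.eq_swap]; exact h.2⟩
  loopless := ⟨fun u h => h.1 rfl⟩

/-- The number of `C↻ₖ`-free orientations of a graph. -/
noncomputable def countCkFree {V : Type*} (k : ℕ) (G : SimpleGraph V) : ℕ :=
  Nat.card {D : GraphOrientation G // ¬ D.HasDirCycle k}

/-! For each `a ∈ A` choose greedily a fingerprint: out- and in-neighbours `w ∈ V(H)` of `a`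
whose sets of `(r-1)`-path neighbours in `B` (paths of `H⃗` avoiding `X ∪ A`) each add many new
vertices. Every such path extends through `a` to an `r`-path, so the `r`-sparseness of the
extension allows only `O(p^{-1/ℓ})` fingerprint vertices. The container of a fingerprint
consists of the pairs `(a, w)` whose neighbourhood is almost covered already; by the greedy stopping
rule it contains every edge between `A` and `V(H)`. If more than `α` vertices outside `B ∪ X`
were almost covered in both directions, they would span too few edges to the uncovered part of
`B` for `(r-1)`-local density; this bounds the antiparallel pairs, and counting fingerprints
bounds the family. -/

open Finset in
theorem Finset.exists_subset_greedy_cover {ι α : Type*} [DecidableEq ι] [Finite α]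
    (N : Finset ι) (β : ι → Set α) {t : ℝ} (ht : 0 < t) :
    ∃ S ⊆ N, t * #S ≤ (⋃ i ∈ S, β i).ncard ∧
      ∀ i ∈ N, ((β i \ ⋃ j ∈ S, β j).ncard : ℝ) < t := by
  classical
  obtain ⟨S, hS, hmax⟩ := (N.powerset.filter fun S => t * #S ≤ (⋃ i ∈ S, β i).ncard)
    |>.exists_max_image (fun S => (⋃ i ∈ S, β i).ncard) ⟨∅, by simp⟩
  rw [mem_filter, mem_powerset] at hS
  refine ⟨S, hS.1, hS.2, fun i hi => not_le.1 fun hti => ?_⟩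
  -- adding `i` to `S` would keep the greedy invariant and strictly enlarge the union
  have hU : (⋃ j ∈ insert i S, β j).ncard =
      (β i \ ⋃ j ∈ S, β j).ncard + (⋃ j ∈ S, β j).ncard := by
    rw [set_biUnion_insert, ← Set.sdiff_union_self,
      Set.ncard_union_eq Set.disjoint_sdiff_left]
  have hins := hmax (insert i S) <| by
    rw [mem_filter, mem_powerset, hU]
    refine ⟨insert_subset hi hS.1, ?_⟩
    have hcard : ((#(insert i S) : ℕ) : ℝ) ≤ #S + 1 := by exact_mod_cast card_insert_le i S
    push_cast
    nlinarith [hS.2]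
  have hpos : 0 < (β i \ ⋃ j ∈ S, β j).ncard := by exact_mod_cast ht.trans_le hti
  omega

theorem Set.ncard_setOf_fst_mem_lt {α β : Type*} [Finite α] [Finite β] {I : Set α}
    (hI : I.Nonempty) {f : α → Set β} {t : ℝ} (h : ∀ a ∈ I, ((f a).ncard : ℝ) < t) :
    ({q : α × β | q.1 ∈ I ∧ q.2 ∈ f q.1}.ncard : ℝ) < I.ncard * t := by
  classical
  have := Fintype.ofFinite α
  have hsub : {q : α × β | q.1 ∈ I ∧ q.2 ∈ f q.1} ⊆ ⋃ a ∈ I.toFinset, Prod.mk a '' f a := by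
    rintro ⟨a, b⟩ ⟨ha, hb⟩
    exact Set.mem_biUnion (by simpa using ha) ⟨b, hb, rfl⟩
  have hle := (Set.ncard_le_ncard hsub).trans (I.toFinset.set_ncard_biUnion_le _) |>.trans
    (Finset.sum_le_sum fun a _ => Set.ncard_image_le (Set.toFinite (f a)))
  calc ({q : α × β | q.1 ∈ I ∧ q.2 ∈ f q.1}.ncard : ℝ) ≤ ∑ a ∈ I.toFinset, ((f a).ncard : ℝ) := by
        exact_mod_cast hle
    _ < ∑ _a ∈ I.toFinset, t :=
        Finset.sum_lt_sum_of_nonempty (by simpa using hI) fun a ha => h a (by simpa using ha)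
    _ = I.ncard * t := by rw [Finset.sum_const, nsmul_eq_mul, Set.ncard_eq_toFinset_card']

theorem Nat.card_subtype_ncard_le_le {γ : Type*} [Finite γ] (K : ℕ) :
    Nat.card {S : Set γ // S.ncard ≤ K} ≤ (Nat.card γ + 1) ^ K := by
  classical
  have := Fintype.ofFinite γ
  have hinj : Function.Injective fun S : {S : Set γ // S.ncard ≤ K} =>
      (⟨S.1.toFinset, by rw [← Set.ncard_eq_toFinset_card']; exact S.2⟩ :
        {T : Finset γ // T.card ≤ K}) :=
    fun S S' h => Subtype.ext (Set.toFinset_inj.1 (congrArg Subtype.val h))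
  refine (Nat.card_le_card_of_injective _ hinj).trans ?_
  rw [Nat.card_eq_fintype_card, Fintype.card_subtype, Nat.card_eq_fintype_card]
  have hsub : Finset.univ.filter (fun T : Finset γ => T.card ≤ K) ⊆
      (Finset.range (K + 1)).biUnion fun i => Finset.powersetCard i Finset.univ :=
    fun T hT => Finset.mem_biUnion.2
      ⟨T.card, by simpa [Nat.lt_succ_iff] using hT, Finset.mem_powersetCard_univ.2 rfl⟩
  calc _ ≤ ∑ i ∈ Finset.range (K + 1), (Fintype.card γ).choose i := by
        simpa using (Finset.card_le_card hsub).trans Finset.card_biUnion_le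
    _ ≤ ∑ i ∈ Finset.range (K + 1), Fintype.card γ ^ i * 1 ^ (K - i) * K.choose i :=
        Finset.sum_le_sum fun i hi => by
          have : 1 ≤ K.choose i := Nat.choose_pos (by simpa [Nat.lt_succ_iff] using hi)
          simpa using Nat.le_mul_of_pos_right _ this |>.trans' (Nat.choose_le_pow _ _)
    _ = (Fintype.card γ + 1) ^ K := (add_pow _ _ _).symm

theorem Real.rpow_le_inv_of_le_inv_pow {p c e : ℝ} {ℓ : ℕ} (hp : 0 < p) (hc : 1 ≤ c)
    (hℓ : ℓ ≠ 0) (hpc : p ≤ (c ^ ℓ)⁻¹) (he : 1 / ℓ ≤ e) : p ^ e ≤ c⁻¹ := by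
  have hp1 : p ≤ 1 := hpc.trans (inv_le_one_of_one_le₀ (one_le_pow₀ hc))
  calc p ^ e ≤ p ^ (1 / ℓ : ℝ) := Real.rpow_le_rpow_of_exponent_ge hp hp1 he
    _ ≤ ((c ^ ℓ)⁻¹) ^ (1 / ℓ : ℝ) := Real.rpow_le_rpow hp.le hpc (by positivity)
    _ = c⁻¹ := by
      rw [Real.inv_rpow (by positivity), one_div, Real.pow_rpow_inv_natCast (by linarith) hℓ]

theorem two_mul_add_one_pow_le_exp {x : ℝ} (hx : 27 ≤ x) (m : ℕ) :
    (2 * x + 1) ^ m ≤ Real.exp (4 / 3 * m * Real.log x) := by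
  have hcube : (2 * x + 1) ^ 3 ≤ x ^ 4 := calc
    (2 * x + 1) ^ 3 ≤ (3 * x) ^ 3 := by gcongr; linarith
    _ = 27 * x ^ 3 := by ring
    _ ≤ x ^ 4 := by nlinarith [pow_pos (by linarith : (0 : ℝ) < x) 3]
  have hlog := Real.log_le_log (by positivity) hcube
  rw [Real.log_pow, Real.log_pow] at hlog
  rw [← Real.exp_log (by positivity : (0 : ℝ) < (2 * x + 1) ^ m), Real.log_pow, Real.exp_le_exp]
  push_cast at hlog
  nlinarith [m.cast_nonneg (α := ℝ)]

theorem le_natCast_of_one_le_half_alphaP {n : ℕ} {p : ℝ} (hp0 : 0 < p) (hp : p ≤ 1 / 4)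
    (h1 : 1 ≤ alphaP n p / 2) (hn : alphaP n p / 2 ≤ n) : (27 : ℝ) ≤ n := by
  unfold alphaP at h1 hn
  have hlog : 0 < Real.log n := by
    by_contra! h
    have : 2 ^ 6 * Real.log n / p ≤ 0 := div_nonpos_of_nonpos_of_nonneg (by linarith) hp0.le
    linarith
  have hn2 : (2 : ℝ) ≤ n := by
    by_contra! h
    have : (n : ℝ) ≤ 1 := by exact_mod_cast Nat.lt_succ_iff.1 (by exact_mod_cast h : n < 2)
    linarith [Real.log_nonpos n.cast_nonneg this]
  have hlog2 : 0.69 < Real.log n :=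
    (Real.log_two_gt_d9.trans_le' (by norm_num)).trans_le (Real.log_le_log (by norm_num) hn2)
  have : 4 * (2 ^ 6 * Real.log n) ≤ 2 ^ 6 * Real.log n / p := by
    rw [le_div_iff₀ hp0]; nlinarith
  linarith

namespace GraphOrientation

variable {V : Type*} {G H : SimpleGraph V}

def reverse (D : GraphOrientation G) : GraphOrientation G where
  dir u v := D.dir v u
  dir_adj _ _ h := (D.dir_adj h).symm
  total _ _ h := D.total h.symm
  asymm _ _ h := D.asymm h

@[simp]
theorem reverse_reverse (D : GraphOrientation G) : D.reverse.reverse = D := rfl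

/-- Lets out- and in-neighbourhoods be treated by a single argument. -/
def orient (D : GraphOrientation G) (s : Bool) : GraphOrientation G := cond s D D.reverse

@[simp]
theorem orient_true (D : GraphOrientation G) : D.orient true = D := rfl

@[simp]
theorem orient_false (D : GraphOrientation G) : D.orient false = D.reverse := rfl

theorem Extends.orient {D : GraphOrientation G} {Hd : GraphOrientation H} (h : D.Extends Hd)
    (s : Bool) : (D.orient s).Extends (Hd.orient s) := by
  cases s
  exacts [fun _ _ huv => h huv, h]

theorem Extends.dir_of_adj {D : GraphOrientation G} {Hd : GraphOrientation H} (h : D.Extends Hd)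
    {u v : V} (hGH : G.Adj u v → H.Adj u v) (huv : D.dir u v) : Hd.dir u v :=
  (Hd.total (hGH (D.dir_adj huv))).resolve_right fun hvu => D.asymm huv (h hvu)

theorem orient_dir_imp {D : GraphOrientation G} {D' : GraphOrientation H} {Y : Set V}
    (h : ∀ u v, u ∉ Y → v ∉ Y → D.dir u v → D'.dir u v) (s : Bool) (u v : V) (hu : u ∉ Y)
    (hv : v ∉ Y) : (D.orient s).dir u v → (D'.orient s).dir u v := by
  cases s
  exacts [h v u hv hu, h u v hu hv]

variable {D : GraphOrientation G} {X : Set V} {k : ℕ} {u v w : V}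

theorem PathEdge.mono {X' : Set V} (hX : X ⊆ X') (h : D.PathEdge X' k u v) :
    D.PathEdge X k u v :=
  let ⟨c, hinj, hc, h0, hlast, hdir⟩ := h
  ⟨c, hinj, fun i hi => hc i (hX hi), h0, hlast, hdir⟩

theorem PathEdge.of_dir {D' : GraphOrientation H}
    (hD : ∀ u v, u ∉ X → v ∉ X → D.dir u v → D'.dir u v) (h : D.PathEdge X k u v) :
    D'.PathEdge X k u v :=
  let ⟨c, hinj, hc, h0, hlast, hdir⟩ := h
  ⟨c, hinj, hc, h0, hlast, fun i => hD _ _ (hc _) (hc _) (hdir i)⟩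

theorem PathEdge.reverse (h : D.PathEdge X k v u) : D.reverse.PathEdge X k u v := by
  obtain ⟨c, hinj, hc, h0, hlast, hdir⟩ := h
  refine ⟨c ∘ Fin.rev, hinj.comp Fin.rev_injective, fun i => hc _, by simpa using hlast,
    by simpa using h0, fun i => ?_⟩
  show D.dir (c i.succ.rev) (c i.castSucc.rev)
  rw [Fin.rev_succ, Fin.rev_castSucc]
  exact hdir i.rev

@[simp]
theorem pathEdge_reverse : D.reverse.PathEdge X k u v ↔ D.PathEdge X k v u :=
  ⟨fun h => by simpa using h.reverse, PathEdge.reverse⟩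

theorem PathEdge.cons (hd : D.dir u w) (hp : D.PathEdge (insert u X) k w v) (hu : u ∉ X) :
    D.PathEdge X (k + 1) u v := by
  obtain ⟨c, hinj, hc, h0, hlast, hdir⟩ := hp
  have hnX : ∀ i, Fin.cons (α := fun _ => V) u c i ∉ X :=
    Fin.cases hu fun i => by simpa using fun h => hc i (Set.mem_insert_of_mem _ h)
  have hdir' : ∀ i : Fin (k + 1), D.dir (Fin.cons (α := fun _ => V) u c i.castSucc)
      (Fin.cons (α := fun _ => V) u c i.succ) :=
    Fin.cases (by simpa [h0] using hd) fun i => by simpa [← Fin.succ_castSucc] using hdir i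
  exact ⟨Fin.cons u c, Fin.cons_injective_iff.2 ⟨fun ⟨i, hi⟩ => hc i (hi ▸ Set.mem_insert _ _),
    hinj⟩, hnX, rfl, by simpa [← Fin.succ_last] using hlast, hdir'⟩

theorem dBoth_eq_sum_orient (a : V) (B : Set V) :
    D.dBoth X k a B = ∑ s : Bool, {b ∈ B | (D.orient s).PathEdge X k a b}.ncard := by
  simp [dBoth, add_comm]

theorem eBoth_eq_sum_orient (A B : Set V) :
    D.eBoth X k A B =
      ∑ s : Bool, {q : V × V | q.1 ∈ A ∧ q.2 ∈ B ∧ (D.orient s).PathEdge X k q.1 q.2}.ncard := by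
  simp [eBoth]

theorem LocallyDense.le_eBoth_sdiff [Finite V] {D : GraphOrientation G} {A VH B X A' U : Set V}
    {p α : ℝ} {ℓ k : ℕ} (hdense : D.LocallyDense (A ∪ VH) p ℓ k α) (hAVH : Disjoint A VH)
    (hB : B ⊆ VH) (hX : X ⊆ VH) (hBX : Disjoint B X) (hA : (A.ncard : ℝ) = α / 2)
    (hBlo : ((k : ℝ) + 1) * α ≤ B.ncard) (hBhi : (B.ncard : ℝ) ≤ ℓ * α)
    (hXcard : (X.ncard : ℝ) ≤ (ℓ - k) * α) (hA'VH : A' ⊆ VH) (hA'BX : Disjoint A' (B ∪ X))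
    (hA' : (A'.ncard : ℝ) = α) (hUB : U ⊆ B) (hU : (U.ncard : ℝ) ≤ α / 2) :
    1 / 2 * p ^ (((ℓ : ℝ) - k + 1) / ℓ) * α * (B.ncard - U.ncard) ≤
      D.eBoth (X ∪ A ∪ U) k A' (B \ U) := by
  have hB' : ((B \ U).ncard : ℝ) = B.ncard - U.ncard := by
    rw [Set.ncard_sdiff hUB, Nat.cast_sub (Set.ncard_le_ncard hUB)]
  have hX' : ((X ∪ A ∪ U).ncard : ℝ) ≤ X.ncard + A.ncard + U.ncard := by
    have := (Set.ncard_union_le (X ∪ A) U).trans (Nat.add_le_add_right (Set.ncard_union_le X A) _)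
    exact_mod_cast this
  have hα : 0 ≤ α := by linarith [A.ncard.cast_nonneg (α := ℝ)]
  have hA'B : Disjoint A' B := hA'BX.mono_right Set.subset_union_left
  have hA'X : Disjoint A' X := hA'BX.mono_right Set.subset_union_right
  rw [← hA', ← hB']
  refine hdense A' (B \ U) (X ∪ A ∪ U) (hA'VH.trans Set.subset_union_right)
    (Set.sdiff_subset.trans (hB.trans Set.subset_union_right))
    (Set.union_subset (Set.union_subset (hX.trans Set.subset_union_right) Set.subset_union_left)
      (hUB.trans (hB.trans Set.subset_union_right)))
    (hA'B.mono_right Set.sdiff_subset)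
    (Set.disjoint_union_right.2 ⟨Set.disjoint_union_right.2 ⟨hA'X, (hAVH.mono_right hA'VH).symm⟩,
      hA'B.mono_right hUB⟩)
    (Set.disjoint_union_right.2 ⟨Set.disjoint_union_right.2 ⟨hBX.mono_left Set.sdiff_subset,
      (hAVH.mono_right (Set.sdiff_subset.trans hB)).symm⟩, Set.disjoint_sdiff_left⟩)
    hA' (by rw [hB']; nlinarith) (by rw [hB']; linarith [U.ncard.cast_nonneg (α := ℝ)])
    (by linarith)

end GraphOrientation

namespace Fingerprint

section

variable {V : Type*} (R : Bool → V → V → Prop) (B : Set V) (t : ℝ)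

-- A fingerprint `S : Set (V × Bool)` lists vertices tagged with a direction `s`;
-- `R s w b` says that `w` reaches `b ∈ B` in direction `s`.

def reach (s : Bool) (w : V) : Set V := {b ∈ B | R s w b}

def covered (S : Set (V × Bool)) (s : Bool) : Set V := ⋃ w ∈ {w | (w, s) ∈ S}, reach R B s w

def Absorbs (S : Set (V × Bool)) (s : Bool) (w : V) : Prop :=
  ((reach R B s w \ covered R B S s).ncard : ℝ) < t

def bothAbsorbed (VH : Set V) (S : Set (V × Bool)) : Set V :=
  {w ∈ VH | ∀ s, Absorbs R B t S s w}

def container (A VH : Set V) (F : V → Set (V × Bool)) : Set (V × V) :=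
  {e | e.1 ∈ A ∧ e.2 ∈ VH ∧ Absorbs R B t (F e.1) true e.2 ∨
    e.1 ∈ VH ∧ e.2 ∈ A ∧ Absorbs R B t (F e.2) false e.1}

def admissible (A VH : Set V) (K : ℕ) (Z : Set V) (m : ℝ) : Set (V → Set (V × Bool)) :=
  {F | (∀ x ∉ A, F x = ∅) ∧
    ∀ x ∈ A, (F x).ncard ≤ K ∧ ((bothAbsorbed R B t VH (F x) \ Z).ncard : ℝ) ≤ m}

def containers (A VH : Set V) (K : ℕ) (Z : Set V) (m : ℝ) : Set (Set (V × V)) :=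
  container R B t A VH '' admissible R B t A VH K Z m

theorem covered_subset (S : Set (V × Bool)) (s : Bool) : covered R B S s ⊆ B :=
  Set.iUnion₂_subset fun _ _ _ hb => hb.1

variable {R B t} {A VH : Set V} {K : ℕ} {Z : Set V} {m : ℝ}

theorem mem_of_mem_containers {C : Set (V × V)} (hC : C ∈ containers R B t A VH K Z m)
    {e : V × V} (he : e ∈ C) : e.1 ∈ A ∪ VH ∧ e.2 ∈ A ∪ VH := by
  obtain ⟨F, -, rfl⟩ := hC
  rcases he with ⟨h1, h2, -⟩ | ⟨h1, h2, -⟩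
  exacts [⟨.inl h1, .inr h2⟩, ⟨.inr h1, .inl h2⟩]

theorem ncard_antiparallel_le [Finite V] (hAVH : Disjoint A VH) {C : Set (V × V)}
    (hC : C ∈ containers R B t A VH K Z m) :
    ({z : Sym2 V | ∃ u v, z = s(u, v) ∧ (u, v) ∈ C ∧ (v, u) ∈ C}.ncard : ℝ) ≤
      A.ncard * (Z.ncard + m) := by
  classical
  have := Fintype.ofFinite V
  obtain ⟨F, ⟨-, hF⟩, rfl⟩ := hC
  have hsub : {z : Sym2 V | ∃ u v, z = s(u, v) ∧ (u, v) ∈ container R B t A VH F ∧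
      (v, u) ∈ container R B t A VH F} ⊆
      ⋃ a ∈ A.toFinset, (fun w => s(a, w)) '' bothAbsorbed R B t VH (F a) := by
    rintro z ⟨u, v, rfl, ⟨hu, hv, h⟩ | ⟨hu, hv, h⟩, ⟨hv', hu', h'⟩ | ⟨hv', hu', h'⟩⟩
    · exact absurd hu' (hAVH.ne_of_mem hu hu' rfl).elim
    · refine Set.mem_biUnion (by simpa using hu) ⟨v, ⟨hv, ?_⟩, rfl⟩
      exact Bool.forall_bool.2 ⟨h', h⟩
    · refine Set.mem_biUnion (by simpa using hv) ⟨u, ⟨hu, ?_⟩, Sym2.eq_swap⟩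
      exact Bool.forall_bool.2 ⟨h, h'⟩
    · exact (hAVH.ne_of_mem hu' hu rfl).elim
  have hQ : ∀ a ∈ A, ((bothAbsorbed R B t VH (F a)).ncard : ℝ) ≤ Z.ncard + m := fun a ha => by
    set Q := bothAbsorbed R B t VH (F a)
    have h := Set.ncard_inter_add_ncard_sdiff_eq_ncard Q Z
    have hZ := Set.ncard_le_ncard (Set.inter_subset_right : Q ∩ Z ⊆ Z)
    have : Q.ncard ≤ Z.ncard + (Q \ Z).ncard := by omega
    have : (Q.ncard : ℝ) ≤ Z.ncard + (Q \ Z).ncard := by exact_mod_cast this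
    linarith [(hF a ha).2]
  have hle := (Set.ncard_le_ncard hsub).trans (A.toFinset.set_ncard_biUnion_le _) |>.trans
    (Finset.sum_le_sum fun a _ => Set.ncard_image_le (Set.toFinite _))
  calc _ ≤ ∑ a ∈ A.toFinset, ((bothAbsorbed R B t VH (F a)).ncard : ℝ) := by exact_mod_cast hle
    _ ≤ ∑ _a ∈ A.toFinset, ((Z.ncard : ℝ) + m) :=
        Finset.sum_le_sum fun a ha => hQ a (by simpa using ha)
    _ = A.ncard * (Z.ncard + m) := by
        rw [Finset.sum_const, nsmul_eq_mul, ← Set.ncard_eq_toFinset_card' A]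

theorem ncard_antiparallel_le_mul_sq [Finite V] {X : Set V} {ℓ k : ℕ} {α : ℝ}
    (hAVH : Disjoint A VH) (hA : (A.ncard : ℝ) = α / 2) (hBhi : (B.ncard : ℝ) ≤ ℓ * α)
    (hXcard : (X.ncard : ℝ) ≤ (ℓ - k) * α) (hk : 1 ≤ k) {C : Set (V × V)}
    (hC : C ∈ containers R B t A VH K (B ∪ X) α) :
    ({z : Sym2 V | ∃ u v, z = s(u, v) ∧ (u, v) ∈ C ∧ (v, u) ∈ C}.ncard : ℝ) ≤ ℓ * α ^ 2 := by
  refine (ncard_antiparallel_le hAVH hC).trans ?_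
  have hα : 0 ≤ α := by linarith [A.ncard.cast_nonneg (α := ℝ)]
  have hBX : ((B ∪ X).ncard : ℝ) ≤ B.ncard + X.ncard := by exact_mod_cast Set.ncard_union_le B X
  have hk' : (1 : ℝ) ≤ k := by exact_mod_cast hk
  have : ((B ∪ X).ncard : ℝ) + α ≤ 2 * ℓ * α := by nlinarith [mul_le_mul_of_nonneg_right hk' hα]
  rw [hA]
  nlinarith [mul_le_mul_of_nonneg_left this (by linarith : 0 ≤ α / 2)]

end

section

variable {V : Type*} [Finite V] {R : Bool → V → V → Prop} {B : Set V} {t : ℝ}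
  {A VH : Set V} {K : ℕ} {Z : Set V} {m : ℝ}

theorem ncard_containers_le :
    (containers R B t A VH K Z m).ncard ≤ (2 * Nat.card V + 1) ^ (K * A.ncard) := by
  let restrict (F : admissible R B t A VH K Z m) : A → {S : Set (V × Bool) // S.ncard ≤ K} :=
    fun a => ⟨F.1 a, (F.2.2 a a.2).1⟩
  have hinj : Function.Injective restrict := fun F F' h => Subtype.ext <| funext fun x => by
    by_cases hx : x ∈ A
    · exact congrArg Subtype.val (congrFun h ⟨x, hx⟩)
    · rw [F.2.1 x hx, F'.2.1 x hx]
  calc (containers R B t A VH K Z m).ncard ≤ Nat.card (admissible R B t A VH K Z m) :=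
        (Set.ncard_image_le (Set.toFinite _)).trans_eq (Nat.card_coe_set_eq _).symm
    _ ≤ Nat.card {S : Set (V × Bool) // S.ncard ≤ K} ^ A.ncard := by
        simpa [Nat.card_fun] using Nat.card_le_card_of_injective _ hinj
    _ ≤ ((2 * Nat.card V + 1) ^ K) ^ A.ncard := by
        gcongr
        simpa [Nat.card_prod, mul_comm] using Nat.card_subtype_ncard_le_le (γ := V × Bool) K
    _ = (2 * Nat.card V + 1) ^ (K * A.ncard) := (pow_mul _ _ _).symm

theorem exists_fingerprint (ht : 0 < t) (N T : Bool → Set V)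
    (hNT : ∀ s, ∀ w ∈ N s, reach R B s w ⊆ T s) :
    ∃ S : Set (V × Bool), t * S.ncard ≤ ∑ s, ((T s).ncard : ℝ) ∧
      (∀ s, ∀ w ∈ N s, Absorbs R B t S s w) ∧ ∀ s, covered R B S s ⊆ T s := by
  classical
  have := Fintype.ofFinite V
  choose S hSN hScard hSabs using
    fun s => (N s).toFinset.exists_subset_greedy_cover (reach R B s) ht
  let F : Set (V × Bool) := {p | p.1 ∈ S p.2}
  have hcov : ∀ s, covered R B F s ⊆ T s := fun s b hb => by
    obtain ⟨w, hw, hb⟩ := Set.mem_iUnion₂.1 hb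
    exact hNT s w (by simpa using hSN s hw) hb
  have hF : F.ncard ≤ ∑ s, (S s).card := by
    have hsub : F ⊆ ⋃ s, (·, s) '' (S s : Set V) := fun p hp =>
      Set.mem_iUnion.2 ⟨p.2, p.1, hp, rfl⟩
    refine (Set.ncard_le_ncard hsub).trans <| (Set.ncard_iUnion_le_of_fintype _).trans <|
      Finset.sum_le_sum fun s _ => (Set.ncard_image_le (Set.toFinite _)).trans_eq ?_
    exact Set.ncard_coe_finset _
  refine ⟨F, ?_, fun s w hw => hSabs s w (by simpa using hw), hcov⟩
  calc t * F.ncard ≤ ∑ s, t * (S s).card := by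
        rw [← Finset.mul_sum]; gcongr; exact_mod_cast hF
    _ ≤ ∑ s, ((covered R B F s).ncard : ℝ) := Finset.sum_le_sum fun s _ => hScard s
    _ ≤ ∑ s, ((T s).ncard : ℝ) :=
        Finset.sum_le_sum fun s _ => by exact_mod_cast Set.ncard_le_ncard (hcov s)

theorem eBoth_lt_of_absorbs {G : SimpleGraph V} (D : GraphOrientation G) (X : Set V) (k : ℕ)
    (S : Set (V × Bool)) {A' : Set V} (hA' : A'.Nonempty)
    (habs : ∀ w ∈ A', ∀ s, Absorbs R B t S s w)
    (hDR : ∀ s w b, w ∈ A' → (D.orient s).PathEdge X k w b → R s w b) :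
    (D.eBoth X k A' (B \ ⋃ s, covered R B S s) : ℝ) < 2 * A'.ncard * t := by
  have hdir : ∀ s, ({q : V × V | q.1 ∈ A' ∧ q.2 ∈ B \ ⋃ s, covered R B S s ∧
      (D.orient s).PathEdge X k q.1 q.2}.ncard : ℝ) < A'.ncard * t := fun s => by
    refine lt_of_le_of_lt ?_ (Set.ncard_setOf_fst_mem_lt hA'
      (f := fun w => reach R B s w \ covered R B S s) fun w hw => habs w hw s)
    refine Nat.cast_le.2 (Set.ncard_le_ncard fun q ⟨hq, hb, hpath⟩ => ⟨hq, ?_, ?_⟩)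
    · exact ⟨hb.1, hDR s _ _ hq hpath⟩
    · exact fun hcov => hb.2 (Set.mem_iUnion.2 ⟨s, hcov⟩)
  rw [GraphOrientation.eBoth_eq_sum_orient, Fintype.sum_bool]
  push_cast
  linarith [hdir true, hdir false]

end

section

variable {V : Type*} [Finite V] {G H : SimpleGraph V} {D : GraphOrientation G}
  {Hd : GraphOrientation H} {A VH B X : Set V} {ℓ k K : ℕ} {p α σ : ℝ}

/-- If more than `α` vertices outside `B ∪ X` were absorbed in both directions, `α` of them
and the uncovered part of `B` would span fewer edges of `(D \ (X ∪ A ∪ covered))^k` than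
`k`-local density demands. -/
theorem ncard_bothAbsorbed_sdiff_le (hp : 0 < p) (hα : 0 < α) (hAVH : Disjoint A VH)
    (hB : B ⊆ VH) (hX : X ⊆ VH) (hBX : Disjoint B X) (hA : (A.ncard : ℝ) = α / 2)
    (hBlo : ((k : ℝ) + 1) * α ≤ B.ncard) (hBhi : (B.ncard : ℝ) ≤ ℓ * α)
    (hXcard : (X.ncard : ℝ) ≤ (ℓ - k) * α)
    (hDH : ∀ u v, u ∉ A → v ∉ A → D.dir u v → Hd.dir u v)
    (hdense : D.LocallyDense (A ∪ VH) p ℓ k α) (hℓ : 2 ≤ ℓ) {S : Set (V × Bool)}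
    (hU : ((⋃ s, covered (fun s => (Hd.orient s).PathEdge (X ∪ A) k) B S s).ncard : ℝ) ≤
      B.ncard / (2 * ℓ)) :
    ((bothAbsorbed (fun s => (Hd.orient s).PathEdge (X ∪ A) k) B
      (3 / 16 * p ^ (((ℓ : ℝ) - k + 1) / ℓ) * B.ncard) VH S \ (B ∪ X)).ncard : ℝ) ≤ α := by
  set R : Bool → V → V → Prop := fun s => (Hd.orient s).PathEdge (X ∪ A) k
  set t := 3 / 16 * p ^ (((ℓ : ℝ) - k + 1) / ℓ) * B.ncard with ht
  set Q := bothAbsorbed R B t VH S \ (B ∪ X)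
  set U := ⋃ s, covered R B S s
  have hℓ' : (2 : ℝ) ≤ ℓ := by exact_mod_cast hℓ
  have hU4 : (U.ncard : ℝ) ≤ B.ncard / 4 :=
    hU.trans (div_le_div_of_nonneg_left (Nat.cast_nonneg _) (by norm_num) (by linarith))
  have hUα : (U.ncard : ℝ) ≤ α / 2 :=
    hU.trans ((div_le_div_of_nonneg_right hBhi (by positivity)).trans_eq (by field_simp))
  by_contra! hQ
  obtain ⟨A', hA'Q, hA'⟩ := Set.exists_subset_card_eq (s := Q) (n := 2 * A.ncard) <| by
    have : ((2 * A.ncard : ℕ) : ℝ) ≤ Q.ncard := by push_cast; linarith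
    exact_mod_cast this
  have hA'α : (A'.ncard : ℝ) = α := by rw [hA']; push_cast; linarith
  have hUB : U ⊆ B := Set.iUnion_subset fun s => covered_subset R B S s
  have hlow := hdense.le_eBoth_sdiff hAVH hB hX hBX hA hBlo hBhi hXcard
    (fun w hw => (hA'Q hw).1.1) (Set.disjoint_left.2 fun w hw => (hA'Q hw).2) hA'α hUB hUα
  have hup := eBoth_lt_of_absorbs D (X ∪ A ∪ U) k S (R := R) (B := B) (t := t)
    (Set.nonempty_of_ncard_ne_zero fun h => by simp [h] at hA'α; linarith)
    (fun w hw => (hA'Q hw).1.2)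
    fun s w b _ h => (h.mono Set.subset_union_left).of_dir <|
      GraphOrientation.orient_dir_imp (fun u v hu hv => hDH u v (hu ∘ .inr) (hv ∘ .inr)) s
  rw [hA'α, ht] at hup
  have hρ : 0 < p ^ (((ℓ : ℝ) - k + 1) / ℓ) := Real.rpow_pos_of_pos hp _
  nlinarith [mul_nonneg (mul_pos hρ hα).le (sub_nonneg.2 hU4)]

theorem exists_fingerprint_of_sparse (hp : 0 < p) (hAVH : Disjoint A VH)
    (hB : B ⊆ VH) (hX : X ⊆ VH) (hBX : Disjoint B X) (hA : (A.ncard : ℝ) = α / 2)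
    (hBlo : ((k : ℝ) + 1) * α ≤ B.ncard) (hBhi : (B.ncard : ℝ) ≤ ℓ * α)
    (hXcard : (X.ncard : ℝ) ≤ (ℓ - k) * α) (hℓ : 2 ≤ ℓ)
    (hσℓ : σ ≤ (2 * (ℓ : ℝ))⁻¹) (hσK : σ ≤ K * (3 / 16 * p ^ (((ℓ : ℝ) - k + 1) / ℓ)))
    (hext : D.Extends Hd) (hDH : ∀ u v, u ∉ A → v ∉ A → D.dir u v → Hd.dir u v)
    (hdense : D.LocallyDense (A ∪ VH) p ℓ k α) {x : V} (hx : x ∈ A)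
    (hsparse : (D.dBoth X (k + 1) x B : ℝ) ≤ σ * B.ncard) :
    ∃ S : Set (V × Bool), S.ncard ≤ K ∧
      ((bothAbsorbed (fun s => (Hd.orient s).PathEdge (X ∪ A) k) B
        (3 / 16 * p ^ (((ℓ : ℝ) - k + 1) / ℓ) * B.ncard) VH S \ (B ∪ X)).ncard : ℝ) ≤ α ∧
      ∀ s, ∀ w ∈ VH, (D.orient s).dir x w → Absorbs (fun s => (Hd.orient s).PathEdge (X ∪ A) k)
        B (3 / 16 * p ^ (((ℓ : ℝ) - k + 1) / ℓ) * B.ncard) S s w := by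
  set R : Bool → V → V → Prop := fun s => (Hd.orient s).PathEdge (X ∪ A) k
  set t := 3 / 16 * p ^ (((ℓ : ℝ) - k + 1) / ℓ) * B.ncard with ht
  have hα : 0 < α := by
    have : (1 : ℝ) ≤ A.ncard := by exact_mod_cast (Set.ncard_pos).2 ⟨x, hx⟩
    linarith
  have htpos : 0 < t := by
    have : 0 < p ^ (((ℓ : ℝ) - k + 1) / ℓ) := Real.rpow_pos_of_pos hp _
    have : (0 : ℝ) < B.ncard := by nlinarith [(k.cast_nonneg : (0 : ℝ) ≤ k)]
    positivity
  have hxX : x ∉ X := fun h => hAVH.ne_of_mem hx (hX h) rfl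
  -- `H⃗`-paths avoiding `X ∪ A` are paths of `G⃗`, and extend through `x` to paths avoiding `X`
  obtain ⟨S, hScard, hSabs, hScov⟩ := exists_fingerprint htpos
    (fun s => {w ∈ VH | (D.orient s).dir x w})
    (fun s => {b ∈ B | (D.orient s).PathEdge X (k + 1) x b}) fun s w ⟨_, hxw⟩ b ⟨hb, hpath⟩ =>
      ⟨hb, ((GraphOrientation.PathEdge.of_dir (fun _ _ _ _ h => hext.orient s h) hpath).mono
        (Set.insert_subset (.inr hx) Set.subset_union_left)).cons hxw hxX⟩
  have hT : ∑ s, (({b ∈ B | (D.orient s).PathEdge X (k + 1) x b}.ncard : ℕ) : ℝ) ≤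
      σ * B.ncard := by
    simpa [GraphOrientation.dBoth_eq_sum_orient] using hsparse
  have hU : ((⋃ s, covered R B S s).ncard : ℝ) ≤ B.ncard / (2 * ℓ) := calc
    _ ≤ ∑ s, (({b ∈ B | (D.orient s).PathEdge X (k + 1) x b}.ncard : ℕ) : ℝ) := by
      exact_mod_cast (Set.ncard_iUnion_le_of_fintype _).trans
        (Finset.sum_le_sum fun s _ => Set.ncard_le_ncard (hScov s))
    _ ≤ σ * B.ncard := hT
    _ ≤ B.ncard / (2 * ℓ) := by
      rw [div_eq_inv_mul]; exact mul_le_mul_of_nonneg_right hσℓ (Nat.cast_nonneg _)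
  refine ⟨S, ?_, ncard_bothAbsorbed_sdiff_le hp hα hAVH hB hX hBX hA hBlo hBhi hXcard hDH
    hdense hℓ hU, fun s w hw hxw => hSabs s w ⟨hw, hxw⟩⟩
  have : t * S.ncard ≤ t * K := calc
    t * S.ncard ≤ σ * B.ncard := hScard.trans hT
    _ ≤ K * (3 / 16 * p ^ (((ℓ : ℝ) - k + 1) / ℓ)) * B.ncard := by gcongr
    _ = t * K := by rw [ht]; ring
  exact_mod_cast le_of_mul_le_mul_left this htpos

theorem exists_mem_containers_forall_dir (hp : 0 < p) (hAVH : Disjoint A VH)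
    (hB : B ⊆ VH) (hX : X ⊆ VH) (hBX : Disjoint B X) (hA : (A.ncard : ℝ) = α / 2)
    (hBlo : ((k : ℝ) + 1) * α ≤ B.ncard) (hBhi : (B.ncard : ℝ) ≤ ℓ * α)
    (hXcard : (X.ncard : ℝ) ≤ (ℓ - k) * α) (hℓ : 2 ≤ ℓ)
    (hσℓ : σ ≤ (2 * (ℓ : ℝ))⁻¹) (hσK : σ ≤ K * (3 / 16 * p ^ (((ℓ : ℝ) - k + 1) / ℓ)))
    (hGsupp : ∀ ⦃u v⦄, G.Adj u v → u ∈ A ∪ VH ∧ v ∈ A ∪ VH)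
    (hGH : ∀ u v, u ∈ VH → v ∈ VH → (G.Adj u v ↔ H.Adj u v)) (hext : D.Extends Hd)
    (hdense : D.LocallyDense (A ∪ VH) p ℓ k α)
    (hsparse : ∀ a ∈ A, (D.dBoth X (k + 1) a B : ℝ) ≤ σ * B.ncard) :
    ∃ C ∈ containers (fun s => (Hd.orient s).PathEdge (X ∪ A) k) B
        (3 / 16 * p ^ (((ℓ : ℝ) - k + 1) / ℓ) * B.ncard) A VH K (B ∪ X) α,
      ∀ u v, D.dir u v → (u ∈ A ∧ v ∈ VH) ∨ (u ∈ VH ∧ v ∈ A) → (u, v) ∈ C := by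
  classical
  have hDH : ∀ u v, u ∉ A → v ∉ A → D.dir u v → Hd.dir u v := fun u v hu hv huv =>
    have hG := hGsupp (D.dir_adj huv)
    hext.dir_of_adj (hGH u v (hG.1.resolve_left hu) (hG.2.resolve_left hv)).1 huv
  choose! S hSK hSQ hSabs using fun x hx => exists_fingerprint_of_sparse hp hAVH hB hX hBX hA
    hBlo hBhi hXcard hℓ hσℓ hσK hext hDH hdense hx (hsparse x hx)
  refine ⟨container _ B _ A VH fun x => if x ∈ A then S x else ∅,
    ⟨_, ⟨fun x hx => if_neg hx, fun x hx => ?_⟩, rfl⟩, ?_⟩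
  · simpa [hx] using And.intro (hSK x hx) (hSQ x hx)
  · rintro u v huv (⟨hu, hv⟩ | ⟨hu, hv⟩)
    · exact .inl ⟨hu, hv, by simpa [hu] using hSabs u hu true v hv huv⟩
    · exact .inr ⟨hu, hv, by simpa [hv] using hSabs v hv false u hu huv⟩

end

theorem ncard_containers_le_exp {n : ℕ} {R : Bool → Fin n → Fin n → Prop} {B : Set (Fin n)}
    {t : ℝ} {A VH Z : Set (Fin n)} {K : ℕ} {m p q : ℝ} (hp0 : 0 < p) (hp : p ≤ 1 / 4)
    (hK : (K : ℝ) ≤ 6 * q) (hA : (A.ncard : ℝ) = alphaP n p / 2) :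
    ((containers R B t A VH K Z m).ncard : ℝ) ≤
      Real.exp (4 * alphaP n p * q * Real.log n) := by
  have hcount : ((containers R B t A VH K Z m).ncard : ℝ) ≤ (2 * n + 1) ^ (K * A.ncard) := by
    exact_mod_cast (ncard_containers_le (R := R)).trans_eq (by rw [Nat.card_fin])
  rcases Nat.eq_zero_or_pos A.ncard with h0 | hpos
  · rw [h0] at hcount hA
    simpa [show alphaP n p = 0 by linarith] using hcount
  · have hn : (27 : ℝ) ≤ n := le_natCast_of_one_le_half_alphaP hp0 hp
      (by rw [← hA]; exact_mod_cast hpos)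
      (by rw [← hA]; exact_mod_cast A.ncard_le_card.trans_eq (Nat.card_fin n))
    refine hcount.trans <| (two_mul_add_one_pow_le_exp hn _).trans <| Real.exp_le_exp.2 ?_
    have hlog : 0 ≤ Real.log n := Real.log_nonneg (by linarith)
    have hα : 0 ≤ alphaP n p := by linarith [A.ncard.cast_nonneg (α := ℝ)]
    push_cast
    rw [hA]
    nlinarith [mul_nonneg (mul_nonneg hα hlog) (sub_nonneg.2 hK)]

end Fingerprint

theorem container_like_proposition_general
    (ℓ n : ℕ) (p : ℝ) (hp0 : 0 < p) (hp1 : p ≤ ((2 * (ℓ : ℝ)) ^ ℓ)⁻¹)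
    (VH : Set (Fin n)) (H : SimpleGraph (Fin n))
    (Hd : GraphOrientation H)
    (r : ℕ) (hr2 : 2 ≤ r) (hrℓ : r ≤ ℓ)
    (A B X : Set (Fin n)) (hAVH : Disjoint A VH) (hB : B ⊆ VH) (hX : X ⊆ VH)
    (hBX : Disjoint B X)
    (hAcard : (A.ncard : ℝ) = alphaP n p / 2)
    (hBlo : (r : ℝ) * alphaP n p ≤ B.ncard)
    (hBhi : (B.ncard : ℝ) ≤ (ℓ : ℝ) * alphaP n p)
    (hXcard : (X.ncard : ℝ) ≤ ((ℓ : ℝ) + 1 - r) * alphaP n p) :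
    ∃ 𝒞 : Set (Set (Fin n × Fin n)), 𝒞.Finite ∧
      -- the elements of `𝒞` are digraphs on the vertex set `A ∪ V(H)`
      (∀ C ∈ 𝒞, ∀ e ∈ C, e.1 ∈ A ∪ VH ∧ e.2 ∈ A ∪ VH) ∧
      -- (i): every relevant orientation has its `A`–`V(H)` edges inside some container
      (∀ G : SimpleGraph (Fin n),
        (∀ ⦃u v⦄, G.Adj u v → u ∈ A ∪ VH ∧ v ∈ A ∪ VH) →
        (∀ u v, u ∈ VH → v ∈ VH → (G.Adj u v ↔ H.Adj u v)) →
        ∀ D : GraphOrientation G,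
          ¬ D.HasDirCycle (ℓ + 2) →
          D.LocallyDense (A ∪ VH) p ℓ 1 (alphaP n p) →
          D.LocallyDense (A ∪ VH) p ℓ (r - 1) (alphaP n p) →
          D.Extends Hd →
          (∀ a ∈ A, (D.dBoth X r a B : ℝ) ≤ p ^ (((ℓ : ℝ) - r + 1) / ℓ) * B.ncard) →
          ∃ C ∈ 𝒞, ∀ u v, D.dir u v →
            (u ∈ A ∧ v ∈ VH) ∨ (u ∈ VH ∧ v ∈ A) → (u, v) ∈ C) ∧
      -- (ii): few antiparallel pairs in each container
      (∀ C ∈ 𝒞,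
        ({z : Sym2 (Fin n) | ∃ u v, z = s(u, v) ∧ (u, v) ∈ C ∧ (v, u) ∈ C}.ncard : ℝ)
          ≤ (ℓ : ℝ) * alphaP n p ^ 2) ∧
      -- (iii): few containers
      ((𝒞.ncard : ℝ) ≤ Real.exp (4 * alphaP n p * p ^ (-(1 : ℝ) / ℓ) * Real.log n)) := by
  obtain ⟨k, rfl⟩ : ∃ k, r = k + 1 := ⟨r - 1, by omega⟩
  rw [Nat.add_sub_cancel]
  have hℓ : (2 : ℝ) ≤ ℓ := by exact_mod_cast hr2.trans hrℓ
  have hrpow {e : ℝ} (he : 1 / ℓ ≤ e) : p ^ e ≤ (2 * (ℓ : ℝ))⁻¹ :=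
    Real.rpow_le_inv_of_le_inv_pow hp0 (by linarith) (by omega) hp1 he
  have hq : 2 * (ℓ : ℝ) ≤ p ^ (-(1 : ℝ) / ℓ) := by
    rw [show -(1 : ℝ) / ℓ = -(1 / ℓ) by ring, Real.rpow_neg hp0.le]
    exact le_inv_of_le_inv₀ (by positivity) (hrpow le_rfl)
  set q := p ^ (-(1 : ℝ) / ℓ)
  set ρ := p ^ (((ℓ : ℝ) - k + 1) / ℓ)
  have hσq : p ^ (((ℓ : ℝ) - (k + 1 : ℕ) + 1) / ℓ) = q * ρ := by
    rw [← Real.rpow_add hp0]; congr 1; field_simp; push_cast; ring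
  -- With `t = (3/16) ρ |B|`, the `(r-1)`-density bound on `B` minus a quarter of it is `2αt`,
  -- and the sparseness bound `p^((ℓ-r+1)/ℓ) |B| = qρ|B|` is `(16/3) q t`.
  refine ⟨Fingerprint.containers (fun s => (Hd.orient s).PathEdge (X ∪ A) k) B
    (3 / 16 * ρ * B.ncard) A VH ⌈16 / 3 * q⌉₊ (B ∪ X) (alphaP n p), Set.toFinite _,
    fun C hC e he => Fingerprint.mem_of_mem_containers hC he, ?_, fun C hC => ?_, ?_⟩
  · intro G hGsupp hGH D _ _ hdense hext hsparse
    refine Fingerprint.exists_mem_containers_forall_dir hp0 hAVH hB hX hBX hAcard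
      (by exact_mod_cast hBlo) hBhi (by push_cast at hXcard; linarith) (by omega)
      (hrpow ?_) ?_ hGsupp hGH hext hdense hsparse
    · rw [div_le_div_iff_of_pos_right (by linarith)]
      push_cast
      linarith [(by exact_mod_cast hrℓ : (k : ℝ) + 1 ≤ ℓ)]
    · rw [hσq]
      nlinarith [Nat.le_ceil (16 / 3 * q), Real.rpow_pos_of_pos hp0 (((ℓ : ℝ) - k + 1) / ℓ)]
  · exact Fingerprint.ncard_antiparallel_le_mul_sq (k := k) hAVH hAcard hBhi
      (by push_cast at hXcard; linarith) (by omega) hC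
  · refine Fingerprint.ncard_containers_le_exp hp0 ?_ ?_ hAcard
    · simpa using hrpow (e := 1) (by rw [div_le_one (by linarith)]; linarith) |>.trans
        (by rw [inv_le_comm₀ (by linarith) (by norm_num)]; linarith)
    · linarith [Nat.ceil_lt_add_one (by positivity : (0 : ℝ) ≤ 16 / 3 * q)]

/-- Proposition 4.1. Given an `r`-frame `(A, H, B, X)` with
`2 ≤ r ≤ ℓ`, there is a family `𝒞` of digraphs on `A ∪ V(H)` containing the
`A`–`V(H)` edges of every orientation in `D_{r-1}(G) ∩ S_r(G, H⃗, B, X)`, each with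
at most `ℓα²` antiparallel pairs, with `|𝒞| ≤ exp(4 α p^{-1/ℓ} log n)`. -/
theorem container_like_proposition
    (ℓ n : ℕ) (p : ℝ) (hp0 : 0 < p) (hp1 : p ≤ ((2 * (ℓ : ℝ)) ^ ℓ)⁻¹)
    (VH : Set (Fin n)) (H : SimpleGraph (Fin n))
    (hHsupp : ∀ ⦃u v⦄, H.Adj u v → u ∈ VH ∧ v ∈ VH)
    (Hd : GraphOrientation H)
    (r : ℕ) (hr2 : 2 ≤ r) (hrℓ : r ≤ ℓ)
    (A B X : Set (Fin n)) (hAVH : Disjoint A VH) (hB : B ⊆ VH) (hX : X ⊆ VH)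
    (hBX : Disjoint B X)
    (hAcard : (A.ncard : ℝ) = alphaP n p / 2)
    (hBlo : (r : ℝ) * alphaP n p ≤ B.ncard)
    (hBhi : (B.ncard : ℝ) ≤ (ℓ : ℝ) * alphaP n p)
    (hXcard : (X.ncard : ℝ) ≤ ((ℓ : ℝ) + 1 - r) * alphaP n p) :
    ∃ 𝒞 : Set (Set (Fin n × Fin n)), 𝒞.Finite ∧
      -- the elements of `𝒞` are digraphs on the vertex set `A ∪ V(H)`
      (∀ C ∈ 𝒞, ∀ e ∈ C, e.1 ∈ A ∪ VH ∧ e.2 ∈ A ∪ VH) ∧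
      -- (i): every relevant orientation has its `A`–`V(H)` edges inside some container
      (∀ G : SimpleGraph (Fin n),
        (∀ ⦃u v⦄, G.Adj u v → u ∈ A ∪ VH ∧ v ∈ A ∪ VH) →
        (∀ u v, u ∈ VH → v ∈ VH → (G.Adj u v ↔ H.Adj u v)) →
        ∀ D : GraphOrientation G,
          ¬ D.HasDirCycle (ℓ + 2) →
          D.LocallyDense (A ∪ VH) p ℓ 1 (alphaP n p) →
          D.LocallyDense (A ∪ VH) p ℓ (r - 1) (alphaP n p) →
          D.Extends Hd →
          (∀ a ∈ A, (D.dBoth X r a B : ℝ) ≤ p ^ (((ℓ : ℝ) - r + 1) / ℓ) * B.ncard) →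
          ∃ C ∈ 𝒞, ∀ u v, D.dir u v →
            (u ∈ A ∧ v ∈ VH) ∨ (u ∈ VH ∧ v ∈ A) → (u, v) ∈ C) ∧
      -- (ii): few antiparallel pairs in each container
      (∀ C ∈ 𝒞,
        ({z : Sym2 (Fin n) | ∃ u v, z = s(u, v) ∧ (u, v) ∈ C ∧ (v, u) ∈ C}.ncard : ℝ)
          ≤ (ℓ : ℝ) * alphaP n p ^ 2) ∧
      -- (iii): few containers
      ((𝒞.ncard : ℝ) ≤ Real.exp (4 * alphaP n p * p ^ (-(1 : ℝ) / ℓ) * Real.log n)) :=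
  container_like_proposition_general ℓ n p hp0 hp1 VH H Hd r hr2 hrℓ A B X hAVH hB hX hBX hAcard
    hBlo hBhi hXcard
end

section
/- Let G be a graph on n vertices, let q be a nonnegative integer, and let 0 ≤ β ≤ 1 and R be reals with R ≥ e^{−βq} n. Suppose that every set U ⊂ V(G) with |U| ≥ R satisfies e(G[U]) ≥ β·binom(|U|, 2). Then there exists a collection 𝒞 of subsets of V(G) such that: (i) every independent set of G is contained in some C ∈ 𝒞; (ii) |C| ≤ R + q for every C ∈ 𝒞; and (iii) |𝒞| ≤ Σ_{i=0}^{q} binom(n, i). -/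
open MeasureTheory Filter

section KWContainer

open Finset
open scoped Classical
set_option linter.unusedSectionVars false

variable {V : Type*} [Fintype V]

/-- Degree of `v` into `A`. -/
noncomputable def kwDeg (G : SimpleGraph V) (A : Finset V) (v : V) : ℕ :=
  (A.filter fun w => G.Adj v w).card

/-- Closed neighborhood of `v` inside `A` (assuming `v ∈ A`). -/
noncomputable def kwNbhd (G : SimpleGraph V) (A : Finset V) (v : V) : Finset V :=
  insert v (A.filter fun w => G.Adj v w)

lemma kwNbhd_subset (G : SimpleGraph V) {A : Finset V} {v : V} (hv : v ∈ A) :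
    kwNbhd G A v ⊆ A := by
  classical
  exact insert_subset hv (filter_subset _ _)

lemma mem_kwNbhd_self (G : SimpleGraph V) (A : Finset V) (v : V) : v ∈ kwNbhd G A v :=
  mem_insert_self _ _

lemma kwNbhd_card (G : SimpleGraph V) (A : Finset V) (v : V) :
    (kwNbhd G A v).card = kwDeg G A v + 1 := by
  classical
  rw [kwNbhd, card_insert_of_notMem, kwDeg]
  simp [G.irrefl]

lemma not_mem_kwNbhd (G : SimpleGraph V) {A : Finset V} {v w : V} (hw : w ≠ v)
    (hadj : ¬ G.Adj v w) : w ∉ kwNbhd G A v := by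
  classical
  simp [kwNbhd, hw, hadj]

noncomputable def kwPick (G : SimpleGraph V) (β : ℝ) (A : Finset V) (h : A.Nonempty) : V :=
  if hd : ∃ v, v ∈ A ∧ β * ((A.card : ℝ) - 1) ≤ (kwDeg G A v : ℝ) then hd.choose
  else h.choose

lemma kwPick_mem (G : SimpleGraph V) (β : ℝ) (A : Finset V) (h : A.Nonempty) :
    kwPick G β A h ∈ A := by
  unfold kwPick; split_ifs with hd
  · exact hd.choose_spec.1
  · exact h.choose_spec

lemma kwPick_deg (G : SimpleGraph V) (β : ℝ) (A : Finset V) (h : A.Nonempty)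
    (hd : ∃ v, v ∈ A ∧ β * ((A.card : ℝ) - 1) ≤ (kwDeg G A v : ℝ)) :
    β * ((A.card : ℝ) - 1) ≤ (kwDeg G A (kwPick G β A h) : ℝ) := by
  unfold kwPick; rw [dif_pos hd]; exact hd.choose_spec.2

lemma kwNe {R : ℝ} (hR0 : 0 ≤ R) {A : Finset V} (h : R < (A.card : ℝ)) : A.Nonempty := by
  rw [← Finset.card_pos]
  exact_mod_cast hR0.trans_lt h

/-- The Kleitman–Winston algorithm: returns (fingerprint, final set). -/
noncomputable def kwProc (G : SimpleGraph V) (β R : ℝ) (hR0 : 0 ≤ R) (P : V → Prop)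
    (A : Finset V) : Finset V × Finset V :=
  if h : R < (A.card : ℝ) then
    if P (kwPick G β A (kwNe hR0 h)) then
      (insert (kwPick G β A (kwNe hR0 h))
        (kwProc G β R hR0 P (A \ kwNbhd G A (kwPick G β A (kwNe hR0 h)))).1,
       (kwProc G β R hR0 P (A \ kwNbhd G A (kwPick G β A (kwNe hR0 h)))).2)
    else kwProc G β R hR0 P (A.erase (kwPick G β A (kwNe hR0 h)))
  else (∅, A)
termination_by A.card
decreasing_by
  · exact card_lt_card (sdiff_ssubset (kwNbhd_subset G (kwPick_mem G β A _))
      ⟨_, mem_kwNbhd_self G A _⟩)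
  · exact card_erase_lt_of_mem (kwPick_mem G β A _)

variable {G : SimpleGraph V} {β R : ℝ} {hR0 : 0 ≤ R}

lemma kwProc_of_stop {P : V → Prop} {A : Finset V} (h : ¬ R < (A.card : ℝ)) :
    kwProc G β R hR0 P A = (∅, A) := by
  rw [kwProc, dif_neg h]

lemma kwProc_of_pos {P : V → Prop} {A : Finset V} (h : R < (A.card : ℝ))
    (hP : P (kwPick G β A (kwNe hR0 h))) :
    kwProc G β R hR0 P A =
      (insert (kwPick G β A (kwNe hR0 h))
        (kwProc G β R hR0 P (A \ kwNbhd G A (kwPick G β A (kwNe hR0 h)))).1,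
       (kwProc G β R hR0 P (A \ kwNbhd G A (kwPick G β A (kwNe hR0 h)))).2) := by
  rw [kwProc, dif_pos h, if_pos hP]

lemma kwProc_of_neg {P : V → Prop} {A : Finset V} (h : R < (A.card : ℝ))
    (hP : ¬ P (kwPick G β A (kwNe hR0 h))) :
    kwProc G β R hR0 P A = kwProc G β R hR0 P (A.erase (kwPick G β A (kwNe hR0 h))) := by
  rw [kwProc, dif_pos h, if_neg hP]

/-- The fingerprint is a subset of `A` consisting of `P`-vertices. -/
lemma kwProc_fst_subset (P : V → Prop) (A : Finset V) :
    (kwProc G β R hR0 P A).1 ⊆ A ∧ ∀ v ∈ (kwProc G β R hR0 P A).1, P v := by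
  classical
  by_cases h : R < (A.card : ℝ)
  · set v := kwPick G β A (kwNe hR0 h) with hv
    by_cases hP : P v
    · rw [kwProc_of_pos h hP]
      obtain ⟨ih1, ih2⟩ := kwProc_fst_subset P (A \ kwNbhd G A v)
      constructor
      · exact insert_subset (kwPick_mem G β A _) (ih1.trans ((sdiff_subset).trans subset_rfl))
      · intro w hw
        rcases mem_insert.mp hw with rfl | hw
        · exact hP
        · exact ih2 w hw
    · rw [kwProc_of_neg h hP]
      obtain ⟨ih1, ih2⟩ := kwProc_fst_subset P (A.erase v)
      exact ⟨ih1.trans (erase_subset _ _), ih2⟩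
  · rw [kwProc_of_stop h]
    exact ⟨by simp, by simp⟩
termination_by A.card
decreasing_by
  · exact card_lt_card (sdiff_ssubset (kwNbhd_subset G (kwPick_mem G β A _))
      ⟨_, mem_kwNbhd_self G A _⟩)
  · exact card_erase_lt_of_mem (kwPick_mem G β A _)

/-- The algorithm depends on `P` only through its values on `A`. -/
lemma kwProc_congr {P Q : V → Prop} (A : Finset V) (hPQ : ∀ x ∈ A, (P x ↔ Q x)) :
    kwProc G β R hR0 P A = kwProc G β R hR0 Q A := by
  classical
  by_cases h : R < (A.card : ℝ)
  · set v := kwPick G β A (kwNe hR0 h) with hv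
    have hvA : v ∈ A := kwPick_mem G β A _
    by_cases hP : P v
    · have hQ : Q v := (hPQ v hvA).mp hP
      rw [kwProc_of_pos h hP, kwProc_of_pos h hQ,
        kwProc_congr (A \ kwNbhd G A v) (fun x hx => hPQ x (sdiff_subset hx))]
    · have hQ : ¬ Q v := fun hq => hP ((hPQ v hvA).mpr hq)
      rw [kwProc_of_neg h hP, kwProc_of_neg h hQ,
        kwProc_congr (A.erase v) (fun x hx => hPQ x (erase_subset _ _ hx))]
  · rw [kwProc_of_stop h, kwProc_of_stop h]
termination_by A.card
decreasing_by
  · exact card_lt_card (sdiff_ssubset (kwNbhd_subset G (kwPick_mem G β A _))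
      ⟨_, mem_kwNbhd_self G A _⟩)
  · exact card_erase_lt_of_mem (kwPick_mem G β A _)

/-- Rerunning the algorithm with the fingerprint gives the same outcome. -/
lemma kwProc_fingerprint (P : V → Prop) (A : Finset V) :
    kwProc G β R hR0 (· ∈ (kwProc G β R hR0 P A).1) A = kwProc G β R hR0 P A := by
  classical
  by_cases h : R < (A.card : ℝ)
  · by_cases hP : P (kwPick G β A (kwNe hR0 h))
    · have hvA2 : kwPick G β A (kwNe hR0 h)
          ∉ A \ kwNbhd G A (kwPick G β A (kwNe hR0 h)) := by
        simp [mem_kwNbhd_self]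
      have hfix1 : (kwProc G β R hR0 P A).1
          = insert (kwPick G β A (kwNe hR0 h))
              (kwProc G β R hR0 P (A \ kwNbhd G A (kwPick G β A (kwNe hR0 h)))).1 := by
        rw [kwProc_of_pos h hP]
      have hagree : ∀ x ∈ A \ kwNbhd G A (kwPick G β A (kwNe hR0 h)),
          ((fun y => y ∈ insert (kwPick G β A (kwNe hR0 h))
              (kwProc G β R hR0 P (A \ kwNbhd G A (kwPick G β A (kwNe hR0 h)))).1) x ↔
           (fun y => y ∈
              (kwProc G β R hR0 P (A \ kwNbhd G A (kwPick G β A (kwNe hR0 h)))).1) x) := by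
        intro x hx
        have hxv : x ≠ kwPick G β A (kwNe hR0 h) := fun hc => hvA2 (hc ▸ hx)
        simp [mem_insert, hxv]
      calc kwProc G β R hR0 (· ∈ (kwProc G β R hR0 P A).1) A
          = kwProc G β R hR0 (· ∈ insert (kwPick G β A (kwNe hR0 h))
              (kwProc G β R hR0 P (A \ kwNbhd G A (kwPick G β A (kwNe hR0 h)))).1) A := by
            rw [hfix1]
        _ = (insert (kwPick G β A (kwNe hR0 h))
              (kwProc G β R hR0 (· ∈ insert (kwPick G β A (kwNe hR0 h))
                (kwProc G β R hR0 P (A \ kwNbhd G A (kwPick G β A (kwNe hR0 h)))).1)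
                (A \ kwNbhd G A (kwPick G β A (kwNe hR0 h)))).1,
             (kwProc G β R hR0 (· ∈ insert (kwPick G β A (kwNe hR0 h))
                (kwProc G β R hR0 P (A \ kwNbhd G A (kwPick G β A (kwNe hR0 h)))).1)
                (A \ kwNbhd G A (kwPick G β A (kwNe hR0 h)))).2) :=
            kwProc_of_pos h (mem_insert_self _ _)
        _ = (insert (kwPick G β A (kwNe hR0 h))
              (kwProc G β R hR0 (· ∈
                (kwProc G β R hR0 P (A \ kwNbhd G A (kwPick G β A (kwNe hR0 h)))).1)
                (A \ kwNbhd G A (kwPick G β A (kwNe hR0 h)))).1,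
             (kwProc G β R hR0 (· ∈
                (kwProc G β R hR0 P (A \ kwNbhd G A (kwPick G β A (kwNe hR0 h)))).1)
                (A \ kwNbhd G A (kwPick G β A (kwNe hR0 h)))).2) := by
            rw [kwProc_congr _ hagree]
        _ = (insert (kwPick G β A (kwNe hR0 h))
              (kwProc G β R hR0 P (A \ kwNbhd G A (kwPick G β A (kwNe hR0 h)))).1,
             (kwProc G β R hR0 P (A \ kwNbhd G A (kwPick G β A (kwNe hR0 h)))).2) := by
            rw [kwProc_fingerprint P (A \ kwNbhd G A (kwPick G β A (kwNe hR0 h)))]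
        _ = kwProc G β R hR0 P A := (kwProc_of_pos h hP).symm
    · have hfix : (kwProc G β R hR0 P A).1
          = (kwProc G β R hR0 P (A.erase (kwPick G β A (kwNe hR0 h)))).1 := by
        rw [kwProc_of_neg h hP]
      have hvS : ¬ (fun x => x ∈ (kwProc G β R hR0 P A).1) (kwPick G β A (kwNe hR0 h)) := by
        rw [hfix]
        intro hc
        exact (notMem_erase _ A)
          ((kwProc_fst_subset P (A.erase (kwPick G β A (kwNe hR0 h)))).1 hc)
      calc kwProc G β R hR0 (· ∈ (kwProc G β R hR0 P A).1) A
          = kwProc G β R hR0 (· ∈ (kwProc G β R hR0 P A).1)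
              (A.erase (kwPick G β A (kwNe hR0 h))) := kwProc_of_neg h hvS
        _ = kwProc G β R hR0 (· ∈
              (kwProc G β R hR0 P (A.erase (kwPick G β A (kwNe hR0 h)))).1)
              (A.erase (kwPick G β A (kwNe hR0 h))) := by rw [hfix]
        _ = kwProc G β R hR0 P (A.erase (kwPick G β A (kwNe hR0 h))) :=
            kwProc_fingerprint P (A.erase (kwPick G β A (kwNe hR0 h)))
        _ = kwProc G β R hR0 P A := (kwProc_of_neg h hP).symm
  · rw [kwProc_of_stop h, kwProc_of_stop h]
termination_by A.card
decreasing_by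
  · exact card_lt_card (sdiff_ssubset (kwNbhd_subset G (kwPick_mem G β A _))
      ⟨_, mem_kwNbhd_self G A _⟩)
  · exact card_erase_lt_of_mem (kwPick_mem G β A _)

/-- Every independent set is covered by fingerprint ∪ final set. -/
lemma kwProc_covers (I : Finset V) (hI : ∀ u ∈ I, ∀ v ∈ I, ¬ G.Adj u v) (A : Finset V) :
    ∀ w ∈ I, w ∈ A →
      w ∈ (kwProc G β R hR0 (· ∈ I) A).1 ∪ (kwProc G β R hR0 (· ∈ I) A).2 := by
  classical
  intro w hwI hwA
  by_cases h : R < (A.card : ℝ)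
  · set v := kwPick G β A (kwNe hR0 h) with hv
    by_cases hP : v ∈ I
    · rw [kwProc_of_pos h (show (· ∈ I) v from hP)]
      by_cases hwv : w = v
      · subst hwv; simp [hv]
      · have hw2 : w ∈ A \ kwNbhd G A v := by
          rw [Finset.mem_sdiff]
          exact ⟨hwA, not_mem_kwNbhd G hwv (hI v hP w hwI)⟩
        have := kwProc_covers I hI (A \ kwNbhd G A v) w hwI hw2
        rcases mem_union.mp this with h1 | h2
        · exact mem_union_left _ (mem_insert_of_mem h1)
        · exact mem_union_right _ h2
    · rw [kwProc_of_neg h (show ¬ (· ∈ I) v from hP)]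
      have hwv : w ≠ v := fun hc => hP (hc ▸ hwI)
      exact kwProc_covers I hI (A.erase v) w hwI (mem_erase.mpr ⟨hwv, hwA⟩)
  · rw [kwProc_of_stop h]
    simpa using hwA
termination_by A.card
decreasing_by
  · exact card_lt_card (sdiff_ssubset (kwNbhd_subset G (kwPick_mem G β A _))
      ⟨_, mem_kwNbhd_self G A _⟩)
  · exact card_erase_lt_of_mem (kwPick_mem G β A _)

/-- The final set is small. -/
lemma kwProc_snd_le (P : V → Prop) (A : Finset V) :
    ((kwProc G β R hR0 P A).2.card : ℝ) ≤ R := by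
  classical
  by_cases h : R < (A.card : ℝ)
  · set v := kwPick G β A (kwNe hR0 h) with hv
    by_cases hP : P v
    · rw [kwProc_of_pos h hP]
      exact kwProc_snd_le P (A \ kwNbhd G A v)
    · rw [kwProc_of_neg h hP]
      exact kwProc_snd_le P (A.erase v)
  · rw [kwProc_of_stop h]
    exact not_lt.mp h
termination_by A.card
decreasing_by
  · exact card_lt_card (sdiff_ssubset (kwNbhd_subset G (kwPick_mem G β A _))
      ⟨_, mem_kwNbhd_self G A _⟩)
  · exact card_erase_lt_of_mem (kwPick_mem G β A _)

lemma kw_degree_eq (A : Finset V) (x : (A : Set V)) :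
    (G.induce (A : Set V)).degree x = kwDeg G A ↑x := by
  classical
  rw [← SimpleGraph.card_neighborFinset_eq_degree, kwDeg]
  refine Finset.card_bij (fun y _ => (y : V)) ?_ ?_ ?_
  · intro y hy
    rw [SimpleGraph.mem_neighborFinset] at hy
    exact mem_filter.mpr ⟨y.2, hy⟩
  · intro a _ b _ hab
    exact Subtype.ext hab
  · intro w hw
    rw [mem_filter] at hw
    refine ⟨⟨w, hw.1⟩, ?_, rfl⟩
    rw [SimpleGraph.mem_neighborFinset]
    exact hw.2

lemma kw_sum_deg (A : Finset V) :
    ∑ v ∈ A, kwDeg G A v = 2 * (G.induce (A : Set V)).edgeSet.ncard := by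
  classical
  have h1 := SimpleGraph.sum_degrees_eq_twice_card_edges (G.induce (A : Set V))
  have h2 : ∑ x : (A : Set V), (G.induce (A : Set V)).degree x = ∑ v ∈ A, kwDeg G A v := by
    rw [← Finset.sum_coe_sort A (kwDeg G A)]
    exact Fintype.sum_equiv (Equiv.subtypeEquivRight (by simp)) _ _
      (fun x => kw_degree_eq A _)
  have h3 : (G.induce (A : Set V)).edgeFinset.card = (G.induce (A : Set V)).edgeSet.ncard := by
    rw [Set.ncard_eq_toFinset_card']
    exact congrArg Finset.card (by ext; simp)
  rw [← h2, h1, h3]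

lemma kw_exists_deg {β R : ℝ}
    (hdens : ∀ U : Finset V, R ≤ U.card →
      β * (U.card.choose 2) ≤ ((G.induce (U : Set V)).edgeSet.ncard : ℝ))
    {A : Finset V} (hA : R ≤ (A.card : ℝ)) (hne : A.Nonempty) :
    ∃ v, v ∈ A ∧ β * ((A.card : ℝ) - 1) ≤ (kwDeg G A v : ℝ) := by
  by_contra hc
  push_neg at hc
  have hlt : ∑ v ∈ A, (kwDeg G A v : ℝ) < ∑ _v ∈ A, β * ((A.card : ℝ) - 1) :=
    Finset.sum_lt_sum_of_nonempty hne (fun v hv => hc v hv)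
  rw [Finset.sum_const, nsmul_eq_mul] at hlt
  have hsum : ∑ v ∈ A, (kwDeg G A v : ℝ)
      = 2 * (((G.induce (A : Set V)).edgeSet.ncard : ℕ) : ℝ) := by
    rw [← Nat.cast_sum]
    exact_mod_cast congrArg (Nat.cast : ℕ → ℝ) (kw_sum_deg A)
  have hh := hdens A hA
  have hchoose : ((A.card.choose 2 : ℕ) : ℝ) = (A.card : ℝ) * ((A.card : ℝ) - 1) / 2 :=
    Nat.cast_choose_two (K := ℝ) A.card
  rw [hchoose] at hh
  rw [hsum] at hlt
  nlinarith [hlt, hh]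

lemma kwProc_fst_card {β R : ℝ} {hR0 : 0 ≤ R} (hβ1 : β ≤ 1)
    (hdens : ∀ U : Finset V, R ≤ U.card →
      β * (U.card.choose 2) ≤ ((G.induce (U : Set V)).edgeSet.ncard : ℝ))
    (P : V → Prop) (A : Finset V) (k : ℕ)
    (hk : k + 1 ≤ (kwProc G β R hR0 P A).1.card) :
    R < (1 - β) ^ k * (A.card : ℝ) := by
  classical
  by_cases h : R < (A.card : ℝ)
  · by_cases hP : P (kwPick G β A (kwNe hR0 h))
    · have hdeg : β * ((A.card : ℝ) - 1) ≤ (kwDeg G A (kwPick G β A (kwNe hR0 h)) : ℝ) :=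
        kwPick_deg G β A (kwNe hR0 h) (kw_exists_deg hdens h.le (kwNe hR0 h))
      have hsub := kwNbhd_subset G (kwPick_mem G β A (kwNe hR0 h))
      have hcard2 : (((A \ kwNbhd G A (kwPick G β A (kwNe hR0 h))).card : ℕ) : ℝ)
          = (A.card : ℝ) - ((kwDeg G A (kwPick G β A (kwNe hR0 h)) : ℝ) + 1) := by
        rw [card_sdiff_of_subset hsub, Nat.cast_sub (card_le_card hsub), kwNbhd_card]
        push_cast
        ring
      have hA2 : (((A \ kwNbhd G A (kwPick G β A (kwNe hR0 h))).card : ℕ) : ℝ)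
          ≤ (1 - β) * (A.card : ℝ) := by
        rw [hcard2]
        nlinarith [hdeg, h, hR0]
      rcases k with _ | k
      · simpa using h
      · have hfix : (kwProc G β R hR0 P A).1 = insert (kwPick G β A (kwNe hR0 h))
            (kwProc G β R hR0 P (A \ kwNbhd G A (kwPick G β A (kwNe hR0 h)))).1 := by
          rw [kwProc_of_pos h hP]
        rw [hfix] at hk
        have hk' : k + 1
            ≤ (kwProc G β R hR0 P (A \ kwNbhd G A (kwPick G β A (kwNe hR0 h)))).1.card := by
          have := card_insert_le (kwPick G β A (kwNe hR0 h))
            (kwProc G β R hR0 P (A \ kwNbhd G A (kwPick G β A (kwNe hR0 h)))).1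
          omega
        have ih := kwProc_fst_card hβ1 hdens P
          (A \ kwNbhd G A (kwPick G β A (kwNe hR0 h))) k hk'
        have hpow : (0 : ℝ) ≤ (1 - β) ^ k := pow_nonneg (by linarith) k
        calc R < (1 - β) ^ k
              * (((A \ kwNbhd G A (kwPick G β A (kwNe hR0 h))).card : ℕ) : ℝ) := ih
          _ ≤ (1 - β) ^ k * ((1 - β) * (A.card : ℝ)) := by
              exact mul_le_mul_of_nonneg_left hA2 hpow
          _ = (1 - β) ^ (k + 1) * (A.card : ℝ) := by ring
    · rw [kwProc_of_neg h hP] at hk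
      have ih := kwProc_fst_card hβ1 hdens P (A.erase (kwPick G β A (kwNe hR0 h))) k hk
      have hpow : (0 : ℝ) ≤ (1 - β) ^ k := pow_nonneg (by linarith) k
      calc R < (1 - β) ^ k * (((A.erase (kwPick G β A (kwNe hR0 h))).card : ℕ) : ℝ) := ih
        _ ≤ (1 - β) ^ k * (A.card : ℝ) := by
            refine mul_le_mul_of_nonneg_left ?_ hpow
            exact_mod_cast card_le_card (erase_subset _ _)
  · rw [kwProc_of_stop h] at hk
    simp at hk
termination_by A.card
decreasing_by
  · exact card_lt_card (sdiff_ssubset (kwNbhd_subset G (kwPick_mem G β A _))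
      ⟨_, mem_kwNbhd_self G A _⟩)
  · exact card_erase_lt_of_mem (kwPick_mem G β A _)

end KWContainer

/-- Graph container lemma of Kleitman–Winston / Sapozhenko. -/
theorem graph_container_lemma
    {V : Type*} [Fintype V] (G : SimpleGraph V) (n : ℕ) (hn : Fintype.card V = n)
    (q : ℕ) (β R : ℝ) (hβ0 : 0 ≤ β) (hβ1 : β ≤ 1)
    (hR : Real.exp (-β * q) * n ≤ R)
    (hdens : ∀ U : Finset V, R ≤ U.card →
      β * (U.card.choose 2) ≤ ((G.induce (U : Set V)).edgeSet.ncard : ℝ)) :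
    ∃ 𝒞 : Finset (Finset V),
      (∀ I : Finset V, (∀ u ∈ I, ∀ v ∈ I, ¬ G.Adj u v) → ∃ C ∈ 𝒞, I ⊆ C) ∧
      (∀ C ∈ 𝒞, (C.card : ℝ) ≤ R + q) ∧
      (𝒞.card ≤ ∑ i ∈ Finset.range (q + 1), n.choose i) := by
    classical
  have hR0 : (0 : ℝ) ≤ R := le_trans (by positivity) hR
  refine ⟨(Finset.range (q + 1)).biUnion (fun i => (Finset.univ.powersetCard i).image
    (fun S : Finset V => (kwProc G β R hR0 (· ∈ S) Finset.univ).1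
      ∪ (kwProc G β R hR0 (· ∈ S) Finset.univ).2)), ?_, ?_, ?_⟩
  · intro I hI
    have hScard : (kwProc G β R hR0 (· ∈ I) Finset.univ).1.card ≤ q := by
      by_contra hq
      push_neg at hq
      have hlt := kwProc_fst_card hβ1 hdens (· ∈ I) Finset.univ q hq
      rw [Finset.card_univ, hn] at hlt
      have h1 : (1 : ℝ) - β ≤ Real.exp (-β) := by
        have := Real.add_one_le_exp (-β); linarith
      have h2 : ((1 : ℝ) - β) ^ q ≤ Real.exp (-β * q) := by
        calc ((1 : ℝ) - β) ^ q ≤ (Real.exp (-β)) ^ q := pow_le_pow_left₀ (by linarith) h1 q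
          _ = Real.exp (-β * q) := by rw [← Real.exp_nat_mul]; congr 1; ring
      have h3 : ((1 : ℝ) - β) ^ q * n ≤ Real.exp (-β * q) * n :=
        mul_le_mul_of_nonneg_right h2 (by positivity)
      linarith
    refine ⟨(kwProc G β R hR0 (· ∈ (kwProc G β R hR0 (· ∈ I) Finset.univ).1) Finset.univ).1
        ∪ (kwProc G β R hR0 (· ∈ (kwProc G β R hR0 (· ∈ I) Finset.univ).1) Finset.univ).2,
        ?_, ?_⟩
    · refine Finset.mem_biUnion.mpr ⟨(kwProc G β R hR0 (· ∈ I) Finset.univ).1.card,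
        Finset.mem_range.mpr (Nat.lt_succ_of_le hScard), ?_⟩
      exact Finset.mem_image.mpr ⟨(kwProc G β R hR0 (· ∈ I) Finset.univ).1,
        Finset.mem_powersetCard.mpr ⟨Finset.subset_univ _, rfl⟩, rfl⟩
    · rw [kwProc_fingerprint (· ∈ I) Finset.univ]
      intro w hw
      exact kwProc_covers I hI Finset.univ w hw (Finset.mem_univ w)
  · intro C hC
    rw [Finset.mem_biUnion] at hC
    obtain ⟨i, hi, hC⟩ := hC
    rw [Finset.mem_image] at hC
    obtain ⟨S, hS, rfl⟩ := hC
    rw [Finset.mem_powersetCard] at hS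
    rw [Finset.mem_range] at hi
    have h1 : (kwProc G β R hR0 (· ∈ S) Finset.univ).1.card ≤ q := by
      have hsub : (kwProc G β R hR0 (· ∈ S) Finset.univ).1 ⊆ S := fun x hx =>
        (kwProc_fst_subset (· ∈ S) Finset.univ).2 x hx
      calc (kwProc G β R hR0 (· ∈ S) Finset.univ).1.card
          ≤ S.card := Finset.card_le_card hsub
        _ = i := hS.2
        _ ≤ q := Nat.lt_succ_iff.mp hi
    have h2 := kwProc_snd_le (G := G) (β := β) (hR0 := hR0) (· ∈ S) Finset.univ
    have h3 := Finset.card_union_le (kwProc G β R hR0 (· ∈ S) Finset.univ).1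
      (kwProc G β R hR0 (· ∈ S) Finset.univ).2
    have h4 : ((kwProc G β R hR0 (· ∈ S) Finset.univ).1.card : ℝ) ≤ q := by
      exact_mod_cast h1
    have h5 : (((kwProc G β R hR0 (· ∈ S) Finset.univ).1
        ∪ (kwProc G β R hR0 (· ∈ S) Finset.univ).2).card : ℝ)
        ≤ ((kwProc G β R hR0 (· ∈ S) Finset.univ).1.card : ℝ)
          + ((kwProc G β R hR0 (· ∈ S) Finset.univ).2.card : ℝ) := by
      exact_mod_cast h3
    linarith
  · refine le_trans Finset.card_biUnion_le (Finset.sum_le_sum fun i _ => ?_)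
    calc ((Finset.univ.powersetCard i).image
          (fun S : Finset V => (kwProc G β R hR0 (· ∈ S) Finset.univ).1
            ∪ (kwProc G β R hR0 (· ∈ S) Finset.univ).2)).card
        ≤ (Finset.univ.powersetCard i).card := Finset.card_image_le
      _ = (Finset.univ.card).choose i := Finset.card_powersetCard i Finset.univ
      _ = n.choose i := by rw [Finset.card_univ, hn]
end

section
/- Let ℓ ≥ 1, let G be a graph, let H be an induced subgraph of G with orientation H⃗, and let G⃗ be a C^↻_{ℓ+2}-free orientation of G extending H⃗. Let T ⊂ E(G⃗) \ E(H⃗) be a minimal set of directed edges such that G⃗ is the unique C^↻_{ℓ+2}-free orientation of G whose edge set contains T ∪ E(H⃗). Then for every vertex a ∈ V(G) \ V(H), the sets T^+_a = { v ∈ V(H) : (a,v) ∈ T } and T^−_a = { v ∈ V(H) : (v,a) ∈ T } are independent sets in the digraph H⃗^ℓ; that is, for no two vertices x, y ∈ T^+_a (and likewise for T^−_a) does H⃗ contain a directed path of length ℓ from x to y. -/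
open MeasureTheory Filter

/-- Auxiliary: gluing an orientation's path to `a` yields a directed `(ℓ+2)`-cycle. -/
lemma GraphOrientation.hasCycle_of_path {V : Type*} {G : SimpleGraph V}
    (D : GraphOrientation G) (ℓ : ℕ) (a : V) (c : Fin (ℓ + 1) → V)
    (hinj : Function.Injective c) (ha : ∀ i, c i ≠ a)
    (hfirst : D.dir a (c 0)) (hlast : D.dir (c (Fin.last ℓ)) a)
    (hmid : ∀ i : Fin ℓ, D.dir (c i.castSucc) (c i.succ)) :
    D.HasDirCycle (ℓ + 2) := by
  classical
  refine ⟨fun i => if h : (i : ℕ) = 0 then a else c ⟨(i : ℕ) - 1, by omega⟩, ?_, ?_⟩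
  · intro i j hij
    simp only at hij
    by_cases hi : (i : ℕ) = 0 <;> by_cases hj : (j : ℕ) = 0
    · exact Fin.ext (by omega)
    · rw [dif_pos hi, dif_neg hj] at hij
      exact absurd hij.symm (ha _)
    · rw [dif_neg hi, dif_pos hj] at hij
      exact absurd hij (ha _)
    · rw [dif_neg hi, dif_neg hj] at hij
      have h2 : (i : ℕ) - 1 = (j : ℕ) - 1 := congrArg Fin.val (hinj hij)
      exact Fin.ext (by omega)
  · intro i
    simp only
    have hlt : (i : ℕ) < ℓ + 2 := i.isLt
    by_cases hi : (i : ℕ) = 0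
    · have hm : ((i : ℕ) + 1) % (ℓ + 2) = 1 := by
        rw [hi]; exact Nat.mod_eq_of_lt (by omega)
      rw [dif_pos hi, dif_neg (by omega)]
      convert hfirst using 2
      exact Fin.ext (by simp [hm])
    · by_cases hi2 : (i : ℕ) = ℓ + 1
      · have hm : ((i : ℕ) + 1) % (ℓ + 2) = 0 := by
          rw [hi2]; exact Nat.mod_self _
        rw [dif_neg hi, dif_pos hm]
        convert hlast using 2
        exact Fin.ext (by simp [Fin.last]; omega)
      · have hm : ((i : ℕ) + 1) % (ℓ + 2) = (i : ℕ) + 1 :=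
          Nat.mod_eq_of_lt (by omega)
        rw [dif_neg hi, dif_neg (by omega)]
        convert hmid ⟨(i : ℕ) - 1, by omega⟩ using 2
        exact Fin.ext (by simp [hm])
        exact Fin.ext (by simp only [Fin.val_succ, hm]; omega)

/-- Auxiliary: all vertices of a directed path in the induced subgraph lie in `VH`. -/
lemma path_mem_VH {V : Type*} {G H : SimpleGraph V} {VH : Set V}
    (hind : ∀ u v, H.Adj u v ↔ u ∈ VH ∧ v ∈ VH ∧ G.Adj u v)
    (Hd : GraphOrientation H) {ℓ : ℕ} (hℓ : 1 ≤ ℓ) (c : Fin (ℓ + 1) → V)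
    (hmid : ∀ i : Fin ℓ, Hd.dir (c i.castSucc) (c i.succ)) :
    ∀ i, c i ∈ VH := by
  intro i
  rcases Nat.lt_or_ge (i : ℕ) ℓ with h | h
  · obtain ⟨j, hj⟩ : ∃ j : Fin ℓ, j.castSucc = i := ⟨⟨(i : ℕ), h⟩, Fin.ext rfl⟩
    have hadj := (hind _ _).1 (Hd.dir_adj (hmid j))
    rw [hj] at hadj
    exact hadj.1
  · obtain ⟨j, hj⟩ : ∃ j : Fin ℓ, j.succ = i :=
      ⟨⟨ℓ - 1, by omega⟩, Fin.ext (by have := i.isLt; simp; omega)⟩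
    have hadj := (hind _ _).1 (Hd.dir_adj (hmid j))
    rw [hj] at hadj
    exact hadj.2.1

/-- If `T` is a minimal set of directed edges outside `H⃗` that
determines the `C↻_{ℓ+2}`-free orientation `G⃗` among extensions of `H⃗`, then for
every `a ∈ V(G) \ V(H)` the out- and in-`T`-neighbourhoods of `a` are independent
sets in the digraph `H⃗^ℓ`. -/
theorem fingerprint_neighbourhoods_independent
    {V : Type*} (ℓ : ℕ) (hℓ : 1 ≤ ℓ)
    (G : SimpleGraph V) (VH : Set V) (H : SimpleGraph V)
    (hind : ∀ u v, H.Adj u v ↔ u ∈ VH ∧ v ∈ VH ∧ G.Adj u v)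
    (Hd : GraphOrientation H) (Gd : GraphOrientation G)
    (hfree : ¬ Gd.HasDirCycle (ℓ + 2)) (hext : Gd.Extends Hd)
    (T : Set (V × V))
    (hTsub : ∀ e ∈ T, Gd.dir e.1 e.2 ∧ ¬ Hd.dir e.1 e.2)
    (hTuniq : ∀ D : GraphOrientation G, ¬ D.HasDirCycle (ℓ + 2) → D.Extends Hd →
      (∀ e ∈ T, D.dir e.1 e.2) → D = Gd)
    (hTmin : ∀ T' ⊆ T,
      (∀ D : GraphOrientation G, ¬ D.HasDirCycle (ℓ + 2) → D.Extends Hd →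
        (∀ e ∈ T', D.dir e.1 e.2) → D = Gd) → T' = T)
    (a : V) (ha : a ∉ VH) :
    (∀ x y, x ∈ VH → y ∈ VH → (a, x) ∈ T → (a, y) ∈ T → ¬ Hd.PathEdge ∅ ℓ x y) ∧
    (∀ x y, x ∈ VH → y ∈ VH → (x, a) ∈ T → (y, a) ∈ T → ¬ Hd.PathEdge ∅ ℓ x y) := by
  constructor
  · intro x y hx hy hax hay hpath
    obtain ⟨c, hinj, -, hc0, hcl, hmid⟩ := hpath
    have hmemVH : ∀ i, c i ∈ VH := path_mem_VH hind Hd hℓ c hmid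
    have hxy : x ≠ y := by
      intro h
      have h0l : (0 : Fin (ℓ + 1)) ≠ Fin.last ℓ := by
        intro he
        have := congrArg Fin.val he
        simp [Fin.last] at this
        omega
      exact h0l (hinj (by rw [hc0, hcl, h]))
    have hkey : ∀ D : GraphOrientation G, ¬ D.HasDirCycle (ℓ + 2) → D.Extends Hd →
        (∀ e ∈ T \ {(a, y)}, D.dir e.1 e.2) → D = Gd := by
      intro D hDfree hDext hDT
      apply hTuniq D hDfree hDext
      intro e he
      by_cases hey : e = (a, y)
      · subst hey
        have hadj : G.Adj a y := Gd.dir_adj (hTsub _ he).1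
        rcases D.total hadj with hdir | hdir
        · exact hdir
        · exfalso
          apply hDfree
          apply D.hasCycle_of_path ℓ a c hinj
          · intro i hia; exact ha (hia ▸ hmemVH i)
          · rw [hc0]
            exact hDT (a, x) ⟨hax, by simp [Prod.ext_iff, hxy]⟩
          · rw [hcl]; exact hdir
          · intro i; exact hDext (hmid i)
      · exact hDT e ⟨he, hey⟩
    have hT' := hTmin (T \ {(a, y)}) Set.diff_subset hkey
    have : (a, y) ∈ T \ {(a, y)} := by rw [hT']; exact hay
    simp at this
  · intro x y hx hy hax hay hpath
    obtain ⟨c, hinj, -, hc0, hcl, hmid⟩ := hpath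
    have hmemVH : ∀ i, c i ∈ VH := path_mem_VH hind Hd hℓ c hmid
    have hxy : x ≠ y := by
      intro h
      have h0l : (0 : Fin (ℓ + 1)) ≠ Fin.last ℓ := by
        intro he
        have := congrArg Fin.val he
        simp [Fin.last] at this
        omega
      exact h0l (hinj (by rw [hc0, hcl, h]))
    have hkey : ∀ D : GraphOrientation G, ¬ D.HasDirCycle (ℓ + 2) → D.Extends Hd →
        (∀ e ∈ T \ {(x, a)}, D.dir e.1 e.2) → D = Gd := by
      intro D hDfree hDext hDT
      apply hTuniq D hDfree hDext
      intro e he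
      by_cases hex : e = (x, a)
      · subst hex
        have hadj : G.Adj x a := Gd.dir_adj (hTsub _ he).1
        rcases D.total hadj with hdir | hdir
        · exact hdir
        · exfalso
          apply hDfree
          apply D.hasCycle_of_path ℓ a c hinj
          · intro i hia; exact ha (hia ▸ hmemVH i)
          · rw [hc0]; exact hdir
          · rw [hcl]
            exact hDT (y, a) ⟨hay, by simp [Prod.ext_iff, hxy.symm]⟩
          · intro i; exact hDext (hmid i)
      · exact hDT e ⟨he, hex⟩
    have hT' := hTmin (T \ {(x, a)}) Set.diff_subset hkey
    have : (x, a) ∈ T \ {(x, a)} := by rw [hT']; exact hax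
    simp at this
end

section
/- Every graph G on n vertices admits at most (Σ_{i=0}^{α(G)} binom(n, i))^{2n} orientations containing no directed triangle, where α(G) denotes the independence number of G. -/
open MeasureTheory Filter

/-!
Order the vertices. In a `C↻₃`-free orientation `D`, the set of earlier neighbours `u` of `v`
with `v → u` is closed under the arcs of `D` among the earlier neighbours of `v`: an arc `u → w`
with `v → u` and `w → v` would close a directed triangle. Such a set is determined by the least
representatives of its minimal strong components, and these are pairwise non-adjacent. So, by
induction along the order, `D` is determined by `n` independent sets, which leaves at most
`(∑_{i ≤ α(G)} C(n,i))^n` possibilities.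
-/

open Relation

section MinimalReps

variable {α : Type*} [LinearOrder α] (R : α → α → Prop)

/-- The least element, for the linear order of `α`, of each minimal class of `U` under the
preorder `ReflTransGen R`. -/
def minimalReps (U : Set α) : Set α :=
  {u ∈ U | ∀ w ∈ U, ReflTransGen R w u → ReflTransGen R u w ∧ u ≤ w}

variable {R}

theorem eq_of_mem_minimalReps {U : Set α} {c c' : α} (hc : c ∈ minimalReps R U)
    (hc' : c' ∈ minimalReps R U) (h : ReflTransGen R c c') : c = c' :=
  le_antisymm (hc.2 c' hc'.1 (hc'.2 c hc.1 h).1).2 (hc'.2 c hc.1 h).2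

theorem exists_mem_minimalReps_reflTransGen [Finite α] {U : Set α} {u : α} (hu : u ∈ U) :
    ∃ c ∈ minimalReps R U, ReflTransGen R c u := by
  let below : α → Set α := fun w => {x ∈ U | ReflTransGen R x w}
  obtain ⟨c, ⟨hcU, hcu⟩, hmin⟩ := Set.exists_min_image {w ∈ U | ReflTransGen R w u}
    (fun w => toLex ((below w).ncard, w)) (Set.toFinite _) ⟨u, hu, .refl⟩
  refine ⟨c, ⟨hcU, fun w hwU hwc => ?_⟩, hcu⟩
  have hsub : below w ⊆ below c := fun x hx => ⟨hx.1, hx.2.trans hwc⟩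
  have hkey := Prod.Lex.toLex_le_toLex.1 (hmin w ⟨hwU, hwc.trans hcu⟩)
  by_cases hcw : ReflTransGen R c w
  · have heq : below w = below c :=
      hsub.antisymm fun x hx => ⟨hx.1, hx.2.trans hcw⟩
    rw [heq] at hkey
    exact ⟨hcw, by simpa using hkey⟩
  · have hssub : below w ⊂ below c :=
      ssubset_of_subset_not_superset hsub fun h => hcw (h ⟨hcU, .refl⟩).2
    have := Set.ncard_lt_ncard hssub (Set.toFinite _)
    rcases hkey with hlt | ⟨heq, -⟩ <;> omega

theorem minimalReps_injOn [Finite α] :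
    Set.InjOn (minimalReps R) {U | ∀ u ∈ U, ∀ w, R u w → w ∈ U} := by
  have reach : ∀ U ∈ {U : Set α | ∀ u ∈ U, ∀ w, R u w → w ∈ U},
      U = {u | ∃ c ∈ minimalReps R U, ReflTransGen R c u} := by
    intro U hU
    ext u
    refine ⟨exists_mem_minimalReps_reflTransGen, ?_⟩
    rintro ⟨c, hc, hcu⟩
    induction hcu with
    | refl => exact hc.1
    | tail _ hst ih => exact hU _ ih _ hst
  intro U hU U' hU' h
  rw [reach U hU, reach U' hU', h]

end MinimalReps

namespace GraphOrientation

variable {V : Type*} {G : SimpleGraph V}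

theorem dir_irrefl (D : GraphOrientation G) (a : V) : ¬ D.dir a a :=
  fun h => G.loopless.irrefl a (D.dir_adj h)

theorem dir_iff_adj_and_not_dir (D : GraphOrientation G) {u v : V} :
    D.dir u v ↔ G.Adj u v ∧ ¬ D.dir v u :=
  ⟨fun h => ⟨D.dir_adj h, D.asymm h⟩, fun ⟨hadj, h⟩ => (D.total hadj).resolve_right h⟩

theorem ext_dir {D₁ D₂ : GraphOrientation G} (h : ∀ a b, D₁.dir a b ↔ D₂.dir a b) :
    D₁ = D₂ := by
  obtain ⟨dir₁, _, _, _⟩ := D₁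
  obtain ⟨dir₂, _, _, _⟩ := D₂
  obtain rfl : dir₁ = dir₂ := funext₂ fun a b => propext (h a b)
  rfl

theorem hasDirCycle_three {D : GraphOrientation G} {a b c : V}
    (hab : D.dir a b) (hbc : D.dir b c) (hca : D.dir c a) : D.HasDirCycle 3 := by
  refine ⟨![a, b, c], ?_, fun i => by fin_cases i <;> assumption⟩
  have := (D.dir_adj hab).ne
  have := (D.dir_adj hbc).ne
  have := (D.dir_adj hca).ne
  intro i j hij
  fin_cases i <;> fin_cases j <;> simp_all [eq_comm]

def dirOn (D : GraphOrientation G) (S : Set V) (a b : V) : Prop :=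
  a ∈ S ∧ b ∈ S ∧ D.dir a b

def outNbhdOn (D : GraphOrientation G) (S : Set V) (v : V) : Set V :=
  {u ∈ S | D.dir v u}

theorem outNbhdOn_dirOn_closed {D : GraphOrientation G} (hD : ¬ D.HasDirCycle 3)
    {S : Set V} {v : V} (hS : S ⊆ G.neighborSet v) :
    ∀ u ∈ D.outNbhdOn S v, ∀ w, D.dirOn S u w → w ∈ D.outNbhdOn S v := by
  rintro u ⟨-, hvu⟩ w ⟨-, hwS, huw⟩
  refine ⟨hwS, (D.total (hS hwS)).resolve_right fun hwv => hD ?_⟩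
  exact hasDirCycle_three hvu huw hwv

variable [LinearOrder V]

def outCode (D : GraphOrientation G) (v : V) : Set V :=
  minimalReps (D.dirOn (G.neighborSet v ∩ Set.Iio v))
    (D.outNbhdOn (G.neighborSet v ∩ Set.Iio v) v)

theorem not_adj_of_mem_outCode (D : GraphOrientation G) {v u w : V}
    (hu : u ∈ D.outCode v) (hw : w ∈ D.outCode v) : ¬ G.Adj u w := by
  intro hadj
  rcases D.total hadj with h | h
  · exact hadj.ne (eq_of_mem_minimalReps hu hw (.single ⟨hu.1.1, hw.1.1, h⟩))
  · exact hadj.ne (eq_of_mem_minimalReps hw hu (.single ⟨hw.1.1, hu.1.1, h⟩)).symm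

theorem dir_iff_of_outCode_eq {D₁ D₂ : GraphOrientation G} [Finite V]
    (h₁ : ¬ D₁.HasDirCycle 3) (h₂ : ¬ D₂.HasDirCycle 3) {v : V}
    (hcode : D₁.outCode v = D₂.outCode v)
    (hlt : ∀ a < v, ∀ b < v, D₁.dir a b ↔ D₂.dir a b) :
    ∀ a ≤ v, ∀ b ≤ v, D₁.dir a b ↔ D₂.dir a b := by
  set S := G.neighborSet v ∩ Set.Iio v
  have hS : S ⊆ G.neighborSet v := Set.inter_subset_left
  have hdirOn : D₁.dirOn S = D₂.dirOn S := by
    funext a b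
    exact propext (and_congr_right fun ha => and_congr_right fun hb => hlt a ha.2 b hb.2)
  have hout : D₁.outNbhdOn S v = D₂.outNbhdOn S v := by
    refine minimalReps_injOn (outNbhdOn_dirOn_closed h₁ hS) ?_
      (hcode.trans (congrArg (minimalReps · _) hdirOn.symm))
    rw [hdirOn]
    exact outNbhdOn_dirOn_closed h₂ hS
  have hfrom : ∀ u < v, D₁.dir v u ↔ D₂.dir v u := by
    intro u hu
    by_cases hadj : G.Adj v u
    · have mem (D : GraphOrientation G) : u ∈ D.outNbhdOn S v ↔ D.dir v u :=
        and_iff_right ⟨hadj, hu⟩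
      rw [← mem D₁, ← mem D₂, hout]
    · exact iff_of_false (fun h => hadj (D₁.dir_adj h)) (fun h => hadj (D₂.dir_adj h))
  intro a ha b hb
  rcases ha.lt_or_eq with ha | rfl <;> rcases hb.lt_or_eq with hb | rfl
  · exact hlt a ha b hb
  · rw [D₁.dir_iff_adj_and_not_dir, D₂.dir_iff_adj_and_not_dir, hfrom a ha]
  · exact hfrom b hb
  · exact iff_of_false (D₁.dir_irrefl _) (D₂.dir_irrefl _)

theorem eq_of_outCode_eq [Finite V] {D₁ D₂ : GraphOrientation G}
    (h₁ : ¬ D₁.HasDirCycle 3) (h₂ : ¬ D₂.HasDirCycle 3)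
    (hcode : ∀ v, D₁.outCode v = D₂.outCode v) : D₁ = D₂ := by
  have upTo : ∀ v, ∀ a ≤ v, ∀ b ≤ v, D₁.dir a b ↔ D₂.dir a b := by
    intro v
    induction v using WellFoundedLT.induction with
    | _ v ih =>
      refine dir_iff_of_outCode_eq h₁ h₂ (hcode v) fun a ha b hb => ?_
      exact ih (max a b) (max_lt ha hb) a (le_max_left a b) b (le_max_right a b)
  exact ext_dir fun a b => upTo (max a b) a (le_max_left a b) b (le_max_right a b)

end GraphOrientation

theorem Finset.natCard_card_le_eq_sum_choose (V : Type*) [Fintype V] (a : ℕ) :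
    Nat.card {s : Finset V // s.card ≤ a} =
      ∑ i ∈ Finset.range (a + 1), (Fintype.card V).choose i := by
  classical
  rw [Nat.card_eq_fintype_card, Fintype.card_subtype,
    Finset.card_eq_sum_card_fiberwise (f := Finset.card) (t := Finset.range (a + 1))
      fun s hs => by simpa [Nat.lt_succ_iff] using hs]
  refine Finset.sum_congr rfl fun i hi => ?_
  rw [← Finset.card_univ, ← Finset.card_powersetCard, Finset.powersetCard_eq_filter,
    Finset.filter_filter, Finset.powerset_univ]
  congr 1
  ext s
  simp only [Finset.mem_filter, Finset.mem_univ, true_and, and_iff_right_iff_imp]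
  rintro rfl
  simpa [Nat.lt_succ_iff] using hi

theorem SimpleGraph.card_le_sSup_of_indep {V : Type*} [Fintype V] (G : SimpleGraph V)
    {s : Finset V} (hs : ∀ u ∈ s, ∀ v ∈ s, ¬ G.Adj u v) :
    s.card ≤ sSup {k : ℕ | ∃ s : Finset V, (∀ u ∈ s, ∀ v ∈ s, ¬ G.Adj u v) ∧ s.card = k} :=
  le_csSup ⟨Fintype.card V, by rintro _ ⟨t, -, rfl⟩; exact t.card_le_univ⟩ ⟨s, hs, rfl⟩

/-- inequality (2.1). Every graph `G` on `n` vertices has at most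
`(∑_{i ≤ α(G)} C(n,i))^{2n}` orientations with no directed triangle, where `α(G)` is
the independence number. -/
theorem count_triangle_free_orientations_indep
    {V : Type*} [Fintype V] (n : ℕ) (hn : Fintype.card V = n) (G : SimpleGraph V) :
    Nat.card {D : GraphOrientation G // ¬ D.HasDirCycle 3} ≤
      (∑ i ∈ Finset.range
          (sSup {k : ℕ | ∃ s : Finset V,
            (∀ u ∈ s, ∀ v ∈ s, ¬ G.Adj u v) ∧ s.card = k} + 1),
        n.choose i) ^ (2 * n) := by
  classical
  let _ : LinearOrder V := LinearOrder.lift' _ (Fintype.equivFin V).injective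
  set α := sSup {k : ℕ | ∃ s : Finset V, (∀ u ∈ s, ∀ v ∈ s, ¬ G.Adj u v) ∧ s.card = k}
  let code (D : {D : GraphOrientation G // ¬ D.HasDirCycle 3}) (v : V) :
      {s : Finset V // s.card ≤ α} :=
    ⟨(D.1.outCode v).toFinite.toFinset, G.card_le_sSup_of_indep fun u hu w hw =>
      D.1.not_adj_of_mem_outCode (by simpa using hu) (by simpa using hw)⟩
  have hcode : Function.Injective code := fun D₁ D₂ h => Subtype.ext <|
    GraphOrientation.eq_of_outCode_eq D₁.2 D₂.2 fun v =>
      Set.Finite.toFinset_inj.1 (congrArg Subtype.val (congrFun h v))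
  have hsum : 1 ≤ ∑ i ∈ Finset.range (α + 1), n.choose i := by
    simpa using Finset.single_le_sum (fun i _ => Nat.zero_le (n.choose i))
      (Finset.mem_range.2 α.succ_pos)
  calc Nat.card {D : GraphOrientation G // ¬ D.HasDirCycle 3}
      ≤ Nat.card (V → {s : Finset V // s.card ≤ α}) := Nat.card_le_card_of_injective code hcode
    _ = (∑ i ∈ Finset.range (α + 1), n.choose i) ^ n := by
      rw [Nat.card_fun, Finset.natCard_card_le_eq_sum_choose, Nat.card_eq_fintype_card, hn]
    _ ≤ _ := Nat.pow_le_pow_right hsum (by omega)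
end

section
/- For every integer k ≥ 3, if p = p(n) satisfies n^{−2} ≪ p ≪ n^{−1+1/(k−1)}, then with probability tending to 1 as n → ∞ we have log_2 D(G(n,p), C^↻_k) = (1 + o(1))·p·binom(n, 2). -/
open MeasureTheory Filter

section AuxSt16
open Finset
open scoped Classical

namespace St16

variable {n : ℕ}

/-- The finite sample space. -/
abbrev Om (n : ℕ) := Sym2 (Fin n) → Bool

/-- The weight (probability mass) of a point. -/
noncomputable def mw (pr : ℝ) (ω : Om n) : ℝ :=
  ∏ s : Sym2 (Fin n), (if ω s then pr else 1 - pr)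

lemma mw_nonneg {pr : ℝ} (h0 : 0 ≤ pr) (h1 : pr ≤ 1) (ω : Om n) : 0 ≤ mw pr ω := by
  refine Finset.prod_nonneg fun s _ => ?_
  split <;> linarith

/-- Factorization of sums of products over the cube. -/
lemma sum_prod_eq (F : Sym2 (Fin n) → Bool → ℝ) :
    ∑ ω : Om n, ∏ s : Sym2 (Fin n), F s (ω s)
      = ∏ s : Sym2 (Fin n), (F s true + F s false) := by
  have h := Finset.prod_univ_sum (fun _ : Sym2 (Fin n) => (univ : Finset Bool)) (fun s b => F s b)
  rw [Fintype.piFinset_univ] at h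
  rw [← h]
  exact Finset.prod_congr rfl fun s _ => by simp

lemma sum_mw {pr : ℝ} : ∑ ω : Om n, mw pr ω = 1 := by
  unfold mw
  rw [sum_prod_eq (fun _ b => if b then pr else 1 - pr)]
  have : ∀ s : Sym2 (Fin n), ((if true then pr else 1 - pr) + if false then pr else 1 - pr) = 1 := by
    intro s; simp
  rw [Finset.prod_congr rfl fun s _ => this s, Finset.prod_const_one]

/-- Indicator that edge `s` is present. -/
def ind (s : Sym2 (Fin n)) (ω : Om n) : ℝ := if ω s then 1 else 0

lemma ind_nonneg (s : Sym2 (Fin n)) (ω : Om n) : 0 ≤ ind s ω := by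
  unfold ind; split <;> norm_num

/-- Key moment computation. -/
lemma key (pr : ℝ) (h0 : 0 ≤ pr) (h1 : pr ≤ 1) (S : Finset (Sym2 (Fin n))) :
    ∑ ω : Om n, mw pr ω * ∏ s ∈ S, ind s ω = pr ^ S.card := by
  have h1 : ∀ ω : Om n, mw pr ω * ∏ s ∈ S, ind s ω
      = ∏ s : Sym2 (Fin n),
          ((if ω s then pr else 1 - pr) * (if s ∈ S then (if ω s then (1:ℝ) else 0) else 1)) := by
    intro ω
    rw [Finset.prod_mul_distrib]
    congr 1
    rw [Finset.prod_ite_mem, Finset.univ_inter]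
    exact Finset.prod_congr rfl fun s _ => rfl
  have h2 := sum_prod_eq (n := n)
    (fun s b => (if b then pr else 1 - pr) * (if s ∈ S then (if b then (1:ℝ) else 0) else 1))
  calc ∑ ω : Om n, mw pr ω * ∏ s ∈ S, ind s ω
      = ∑ ω : Om n, ∏ s : Sym2 (Fin n),
          ((if ω s then pr else 1 - pr) * (if s ∈ S then (if ω s then (1:ℝ) else 0) else 1)) :=
        Finset.sum_congr rfl fun ω _ => h1 ω
    _ = ∏ s : Sym2 (Fin n),
          (((if true then pr else 1 - pr) * (if s ∈ S then (if true then (1:ℝ) else 0) else 1)) +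
           ((if false then pr else 1 - pr) * (if s ∈ S then (if false then (1:ℝ) else 0) else 1))) := h2
    _ = ∏ s : Sym2 (Fin n), (if s ∈ S then pr else 1) := by
        refine Finset.prod_congr rfl fun s _ => ?_
        by_cases hs : s ∈ S <;> simp [hs]
    _ = pr ^ S.card := by
        rw [Finset.prod_ite_mem, Finset.univ_inter, Finset.prod_const]

def ND (n : ℕ) : Finset (Sym2 (Fin n)) := univ.filter fun s => ¬ s.IsDiag

lemma card_ND : (ND n).card = n.choose 2 := by
  have : (ND n).card = Fintype.card {s : Sym2 (Fin n) // ¬ s.IsDiag} := by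
    rw [Fintype.card_subtype]
    unfold ND
    congr 1
  rw [this, Sym2.card_subtype_not_diag, Fintype.card_fin]

/-- Number of present (non-diagonal) edges. -/
def edgesF (ω : Om n) : Finset (Sym2 (Fin n)) := (ND n).filter fun s => ω s = true

noncomputable def eR (ω : Om n) : ℝ := ∑ s ∈ ND n, ind s ω

lemma eR_eq (ω : Om n) : eR ω = ((edgesF ω).card : ℝ) := by
  unfold eR ind edgesF
  rw [Finset.card_filter]
  push_cast
  exact Finset.sum_congr rfl fun s _ => by split <;> simp_all

lemma exp_single (pr : ℝ) (h0 : 0 ≤ pr) (h1 : pr ≤ 1) (s : Sym2 (Fin n)) :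
    ∑ ω : Om n, mw pr ω * ind s ω = pr := by
  have h := key pr h0 h1 {s}
  simpa using h

lemma exp_pair (pr : ℝ) (h0 : 0 ≤ pr) (h1 : pr ≤ 1) {s t : Sym2 (Fin n)} (hst : s ≠ t) :
    ∑ ω : Om n, mw pr ω * (ind s ω * ind t ω) = pr ^ 2 := by
  have h := key pr h0 h1 {s, t}
  rw [Finset.card_pair hst] at h
  rw [← h]
  refine Finset.sum_congr rfl fun ω _ => ?_
  rw [Finset.prod_pair hst]

lemma var_bound (pr : ℝ) (h0 : 0 ≤ pr) (h1 : pr ≤ 1) :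
    ∑ ω : Om n, mw pr ω * (eR ω - (ND n).card * pr) ^ 2 ≤ (ND n).card * pr := by
  set M : ℝ := ((ND n).card : ℝ) with hM
  have hMnn : (0:ℝ) ≤ M := Nat.cast_nonneg _
  have hE : ∑ ω : Om n, mw pr ω * eR ω = M * pr := by
    calc ∑ ω : Om n, mw pr ω * eR ω
        = ∑ ω : Om n, ∑ s ∈ ND n, mw pr ω * ind s ω := by
          refine Finset.sum_congr rfl fun ω _ => ?_
          rw [eR, Finset.mul_sum]
      _ = ∑ s ∈ ND n, ∑ ω : Om n, mw pr ω * ind s ω := Finset.sum_comm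
      _ = ∑ _s ∈ ND n, pr := Finset.sum_congr rfl fun s _ => exp_single pr h0 h1 s
      _ = M * pr := by rw [Finset.sum_const, hM]; push_cast; ring
  have hE2 : ∑ ω : Om n, mw pr ω * (eR ω) ^ 2 = M * pr + (M ^ 2 - M) * pr ^ 2 := by
    have hsq : ∀ ω : Om n, mw pr ω * (eR ω) ^ 2
        = ∑ s ∈ ND n, ∑ t ∈ ND n, mw pr ω * (ind s ω * ind t ω) := by
      intro ω
      rw [sq, eR, Finset.sum_mul_sum, Finset.mul_sum]
      exact Finset.sum_congr rfl fun s _ => by rw [Finset.mul_sum]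
    calc ∑ ω : Om n, mw pr ω * (eR ω) ^ 2
        = ∑ ω : Om n, ∑ s ∈ ND n, ∑ t ∈ ND n, mw pr ω * (ind s ω * ind t ω) :=
          Finset.sum_congr rfl fun ω _ => hsq ω
      _ = ∑ s ∈ ND n, ∑ ω : Om n, ∑ t ∈ ND n, mw pr ω * (ind s ω * ind t ω) := Finset.sum_comm
      _ = ∑ s ∈ ND n, ∑ t ∈ ND n, ∑ ω : Om n, mw pr ω * (ind s ω * ind t ω) :=
          Finset.sum_congr rfl fun s _ => Finset.sum_comm
      _ = ∑ s ∈ ND n, ∑ t ∈ ND n, (if t = s then pr else pr ^ 2) := by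
          refine Finset.sum_congr rfl fun s _ => Finset.sum_congr rfl fun t _ => ?_
          by_cases hst : t = s
          · subst hst
            have : ∀ ω : Om n, ind t ω * ind t ω = ind t ω := by
              intro ω; unfold ind; split <;> ring
            rw [Finset.sum_congr rfl fun ω _ => by rw [this ω], if_pos rfl]
            exact exp_single pr h0 h1 t
          · rw [if_neg hst]
            exact exp_pair pr h0 h1 (Ne.symm hst)
      _ = ∑ _s ∈ ND n, (pr ^ 2 * M + (pr - pr ^ 2)) := by
          refine Finset.sum_congr rfl fun s hs => ?_
          have : ∀ t ∈ ND n, (if t = s then pr else pr ^ 2)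
              = pr ^ 2 + (if t = s then pr - pr ^ 2 else 0) := by
            intro t _; split <;> ring
          rw [Finset.sum_congr rfl this, Finset.sum_add_distrib, Finset.sum_const,
            Finset.sum_ite_eq' (ND n) s fun _ => pr - pr ^ 2, if_pos hs, hM]
          push_cast; ring
      _ = M * pr + (M ^ 2 - M) * pr ^ 2 := by
          rw [Finset.sum_const, hM]; push_cast; ring
  have hexp : ∀ ω : Om n, mw pr ω * (eR ω - M * pr) ^ 2
      = mw pr ω * (eR ω) ^ 2 - (2 * (M * pr)) * (mw pr ω * eR ω) + (M * pr) ^ 2 * mw pr ω := by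
    intro ω; ring
  rw [Finset.sum_congr rfl fun ω _ => hexp ω]
  rw [Finset.sum_add_distrib, Finset.sum_sub_distrib, ← Finset.mul_sum, ← Finset.mul_sum,
    hE, hE2, sum_mw]
  nlinarith [mul_nonneg hMnn (sq_nonneg pr)]

/-- Markov's inequality, discrete form. -/
lemma markov (pr : ℝ) (h0 : 0 ≤ pr) (h1 : pr ≤ 1) (f : Om n → ℝ)
    (hf : ∀ ω, 0 ≤ f ω) {t : ℝ} (ht : 0 < t) :
    ∑ ω ∈ univ.filter (fun ω : Om n => t ≤ f ω), mw pr ω ≤ (∑ ω : Om n, mw pr ω * f ω) / t := by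
  rw [le_div_iff₀ ht]
  calc (∑ ω ∈ univ.filter (fun ω : Om n => t ≤ f ω), mw pr ω) * t
      = ∑ ω ∈ univ.filter (fun ω : Om n => t ≤ f ω), mw pr ω * t := by rw [Finset.sum_mul]
    _ ≤ ∑ ω ∈ univ.filter (fun ω : Om n => t ≤ f ω), mw pr ω * f ω := by
        refine Finset.sum_le_sum fun ω hω => ?_
        exact mul_le_mul_of_nonneg_left (Finset.mem_filter.mp hω).2 (mw_nonneg h0 h1 ω)
    _ ≤ ∑ ω : Om n, mw pr ω * f ω := by
        refine Finset.sum_le_sum_of_subset_of_nonneg (Finset.filter_subset _ _) fun ω _ _ => ?_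
        exact mul_nonneg (mw_nonneg h0 h1 ω) (hf ω)

lemma div_le_div_of_nonneg_right' {a b t : ℝ} (hab : a ≤ b) (ht : 0 < t) : a / t ≤ b / t := by
  have := mul_le_mul_of_nonneg_right hab (inv_nonneg.mpr ht.le)
  simpa [div_eq_mul_inv] using this

/-! ### Cycle witnesses -/

def succk {k : ℕ} (i : Fin k) : Fin k := ⟨((i : ℕ) + 1) % k, Nat.mod_lt _ i.pos⟩

def cEdges (k : ℕ) (c : Fin k → Fin n) : Finset (Sym2 (Fin n)) :=
  univ.image fun i : Fin k => s(c i, c (succk i))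

def witnessSet (k : ℕ) (ω : Om n) : Finset (Fin k → Fin n) :=
  (univ.filter fun c : Fin k → Fin n => Function.Injective c).filter
    fun c => ∀ s ∈ cEdges k c, ¬ s.IsDiag ∧ ω s = true

noncomputable def NR (k : ℕ) (ω : Om n) : ℝ := ((witnessSet k ω).card : ℝ)

lemma succk_ne {k : ℕ} (hk : 3 ≤ k) (i : Fin k) : succk i ≠ i := by
  intro h
  have h' : ((i : ℕ) + 1) % k = i := congrArg Fin.val h
  have hik := i.isLt
  rcases Nat.lt_or_ge ((i : ℕ) + 1) k with h2 | h2
  · rw [Nat.mod_eq_of_lt h2] at h'; omega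
  · have he : (i : ℕ) + 1 = k := by omega
    rw [he, Nat.mod_self] at h'; omega

lemma card_cEdges {k : ℕ} (hk : 3 ≤ k) {c : Fin k → Fin n} (hc : Function.Injective c) :
    (cEdges k c).card = k := by
  have hinj : Function.Injective (fun i : Fin k => s(c i, c (succk i))) := by
    intro i j hij
    simp only [Sym2.eq_iff] at hij
    rcases hij with ⟨h1, _⟩ | ⟨h1, h2⟩
    · exact hc h1
    · exfalso
      have e1 : i = succk j := hc h1
      have e2 : succk i = j := hc h2
      subst e1
      have hval : ((((j : ℕ) + 1) % k + 1) % k) = (j : ℕ) := congrArg Fin.val e2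
      have hjk := j.isLt
      set a := (j : ℕ) with ha
      rcases Nat.lt_or_ge (a + 1) k with hlt | hge
      · rw [Nat.mod_eq_of_lt hlt] at hval
        rcases Nat.lt_or_ge (a + 2) k with hlt2 | hge2
        · rw [Nat.mod_eq_of_lt (by omega : a + 1 + 1 < k)] at hval; omega
        · have : (a + 1 + 1) % k = a + 2 - k := by
            rw [Nat.mod_eq_sub_mod (by omega), Nat.mod_eq_of_lt (by omega)]
          rw [this] at hval; omega
      · have he : a + 1 = k := by omega
        rw [he, Nat.mod_self, Nat.zero_add, Nat.mod_eq_of_lt (by omega)] at hval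
        omega
  rw [cEdges, Finset.card_image_of_injective _ hinj, Finset.card_univ, Fintype.card_fin]

lemma exp_N (pr : ℝ) (h0 : 0 ≤ pr) (h1 : pr ≤ 1) {k : ℕ} (hk : 3 ≤ k) :
    ∑ ω : Om n, mw pr ω * NR k ω ≤ (n : ℝ) ^ k * pr ^ k := by
  set IJ := univ.filter fun c : Fin k → Fin n => Function.Injective c with hIJ
  have hcard : ∀ ω : Om n, NR k ω
      = ∑ c ∈ IJ, (if (∀ s ∈ cEdges k c, ¬ s.IsDiag ∧ ω s = true) then (1:ℝ) else 0) := by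
    intro ω
    rw [NR, witnessSet, Finset.card_filter]
    push_cast
    rfl
  have hle1 : ∀ (c : Fin k → Fin n) (ω : Om n),
      (if (∀ s ∈ cEdges k c, ¬ s.IsDiag ∧ ω s = true) then (1:ℝ) else 0)
        ≤ ∏ s ∈ cEdges k c, ind s ω := by
    intro c ω
    split
    · next h =>
      have : ∀ s ∈ cEdges k c, ind s ω = 1 := by
        intro s hs; unfold ind; rw [(h s hs).2]; simp
      rw [Finset.prod_congr rfl this, Finset.prod_const_one]
    · exact Finset.prod_nonneg fun s _ => ind_nonneg s ω
  calc ∑ ω : Om n, mw pr ω * NR k ω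
      = ∑ c ∈ IJ, ∑ ω : Om n, mw pr ω *
          (if (∀ s ∈ cEdges k c, ¬ s.IsDiag ∧ ω s = true) then (1:ℝ) else 0) := by
        rw [← Finset.sum_comm]
        refine Finset.sum_congr rfl fun ω _ => ?_
        rw [hcard ω, Finset.mul_sum]
    _ ≤ ∑ c ∈ IJ, ∑ ω : Om n, mw pr ω * ∏ s ∈ cEdges k c, ind s ω := by
        refine Finset.sum_le_sum fun c _ => Finset.sum_le_sum fun ω _ => ?_
        exact mul_le_mul_of_nonneg_left (hle1 c ω) (mw_nonneg h0 h1 ω)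
    _ = ∑ c ∈ IJ, pr ^ k := by
        refine Finset.sum_congr rfl fun c hc => ?_
        rw [key pr h0 h1 (cEdges k c),
          card_cEdges hk (Finset.mem_filter.mp hc).2]
    _ ≤ (n : ℝ) ^ k * pr ^ k := by
        rw [Finset.sum_const, nsmul_eq_mul]
        refine mul_le_mul_of_nonneg_right ?_ (pow_nonneg h0 k)
        calc (IJ.card : ℝ) ≤ ((univ : Finset (Fin k → Fin n)).card : ℝ) := by
              exact_mod_cast Finset.card_le_card (Finset.filter_subset _ _)
          _ = (n : ℝ) ^ k := by
              rw [Finset.card_univ, Fintype.card_fun, Fintype.card_fin, Fintype.card_fin]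
              push_cast; ring

/-! ### Orientations: counting -/

lemma orient_ext {V : Type*} {G : SimpleGraph V} {D D' : GraphOrientation G}
    (h : ∀ u v, D.dir u v ↔ D'.dir u v) : D = D' := by
  obtain ⟨d, a1, a2, a3⟩ := D
  obtain ⟨d', b1, b2, b3⟩ := D'
  have hd : d = d' := funext fun u => funext fun v => propext (h u v)
  subst hd
  rfl

instance orient_finite {V : Type*} [Finite V] (G : SimpleGraph V) :
    Finite (GraphOrientation G) := by
  refine Finite.of_injective
    (fun D : GraphOrientation G => fun u v : V => decide (D.dir u v)) ?_
  intro D D' h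
  refine orient_ext fun u v => ?_
  have hh := congrFun (congrFun h u) v
  rwa [decide_eq_decide] at hh

lemma dir_iff_not_dir {V : Type*} {G : SimpleGraph V} (D : GraphOrientation G) {u v : V}
    (h : G.Adj u v) : D.dir u v ↔ ¬ D.dir v u := by
  constructor
  · exact fun hd => D.asymm hd
  · exact fun hn => (D.total h).resolve_right hn

def orientOf (G : SimpleGraph (Fin n)) (b : Sym2 (Fin n) → Bool) : GraphOrientation G where
  dir u v := G.Adj u v ∧ ((u < v ∧ b s(u, v) = true) ∨ (v < u ∧ b s(u, v) = false))
  dir_adj := fun u v h => h.1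
  total := by
    intro u v h
    rcases lt_or_gt_of_ne h.ne with hlt | hgt
    · cases hb : b s(u, v)
      · right
        refine ⟨h.symm, Or.inr ⟨hlt, ?_⟩⟩
        rwa [Sym2.eq_swap]
      · exact Or.inl ⟨h, Or.inl ⟨hlt, rfl⟩⟩
    · cases hb : b s(u, v)
      · exact Or.inl ⟨h, Or.inr ⟨hgt, rfl⟩⟩
      · right
        refine ⟨h.symm, Or.inl ⟨hgt, ?_⟩⟩
        rwa [Sym2.eq_swap]
  asymm := by
    rintro u v ⟨ha, h1⟩ ⟨ha', h2⟩
    rw [Sym2.eq_swap (a := v) (b := u)] at h2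
    rcases h1 with ⟨hlt, hb⟩ | ⟨hlt, hb⟩ <;> rcases h2 with ⟨hlt', hb'⟩ | ⟨hlt', hb'⟩
    · exact absurd hlt (lt_asymm hlt')
    · rw [hb] at hb'; simp at hb'
    · rw [hb] at hb'; simp at hb'
    · exact absurd hlt (lt_asymm hlt')

lemma orientOf_dir_iff {G : SimpleGraph (Fin n)} {b : Sym2 (Fin n) → Bool} {u v : Fin n}
    (huv : u < v) (ha : G.Adj u v) : (orientOf G b).dir u v ↔ b s(u, v) = true := by
  constructor
  · rintro ⟨-, ⟨-, hb⟩ | ⟨hgt, -⟩⟩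
    · exact hb
    · exact absurd huv (lt_asymm hgt)
  · exact fun hb => ⟨ha, Or.inl ⟨huv, hb⟩⟩

lemma exists_lt_repr {s : Sym2 (Fin n)} (h : ¬ s.IsDiag) :
    ∃ u v : Fin n, u < v ∧ s = s(u, v) := by
  induction s using Sym2.ind with
  | _ a b =>
    have hab : a ≠ b := by
      intro hab; exact h (by rw [hab]; exact Sym2.mk_isDiag_iff.mpr rfl)
    rcases lt_or_gt_of_ne hab with hlt | hgt
    · exact ⟨a, b, hlt, rfl⟩
    · exact ⟨b, a, hgt, Sym2.eq_swap.symm⟩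

lemma countCkFree_le (k : ℕ) (ω : Om n) :
    countCkFree k (graphOf ω) ≤ 2 ^ (edgesF ω).card := by
  have hmem : ∀ {u v : Fin n}, (graphOf ω).Adj u v → s(u, v) ∈ edgesF ω := by
    intro u v huv
    rw [edgesF, Finset.mem_filter, ND, Finset.mem_filter]
    exact ⟨⟨Finset.mem_univ _, fun hd => huv.1 (Sym2.mk_isDiag_iff.mp hd)⟩, huv.2⟩
  have hkey : ∀ (E : GraphOrientation (graphOf ω)) {u v : Fin n}, u < v →
      ((∃ a b : Fin n, a < b ∧ s(u, v) = s(a, b) ∧ E.dir a b) ↔ E.dir u v) := by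
    intro E u v hlt
    constructor
    · rintro ⟨a, b, hab, hs, hd⟩
      rw [Sym2.eq_iff] at hs
      rcases hs with ⟨h1, h2⟩ | ⟨h1, h2⟩
      · rw [h1, h2]; exact hd
      · rw [h1, h2] at hlt; exact absurd hab (lt_asymm hlt)
    · exact fun hd => ⟨u, v, hlt, rfl, hd⟩
  have hinj : Function.Injective
      (fun D : {D : GraphOrientation (graphOf ω) // ¬ D.HasDirCycle k} =>
        (fun e : ↥(edgesF ω) =>
          decide (∃ a b : Fin n, a < b ∧ (e : Sym2 (Fin n)) = s(a, b) ∧ D.1.dir a b))) := by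
    intro D D' h
    refine Subtype.ext (orient_ext fun u v => ?_)
    by_cases ha : (graphOf ω).Adj u v
    · rcases lt_trichotomy u v with hlt | heq | hgt
      · have hc := congrFun h (⟨s(u, v), hmem ha⟩ : ↥(edgesF ω))
        rw [decide_eq_decide] at hc
        rw [← hkey D.1 hlt, ← hkey D'.1 hlt]
        exact hc
      · exact absurd heq ha.ne
      · have hc := congrFun h (⟨s(v, u), hmem ha.symm⟩ : ↥(edgesF ω))
        rw [decide_eq_decide] at hc
        have hvu : D.1.dir v u ↔ D'.1.dir v u := by
          rw [← hkey D.1 hgt, ← hkey D'.1 hgt]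
          exact hc
        rw [dir_iff_not_dir D.1 ha, dir_iff_not_dir D'.1 ha]
        exact not_congr hvu
    · constructor <;> (intro hd; exact absurd (GraphOrientation.dir_adj _ hd) ha)
  calc countCkFree k (graphOf ω)
      ≤ Nat.card (↥(edgesF ω) → Bool) := Nat.card_le_card_of_injective _ hinj
    _ = 2 ^ (edgesF ω).card := by
        rw [Nat.card_eq_fintype_card, Fintype.card_fun, Fintype.card_coe, Fintype.card_bool]

def Ybad (k : ℕ) (ω : Om n) : Finset (Sym2 (Fin n)) := (witnessSet k ω).biUnion (cEdges k)

lemma orientOf_noCycle {k : ℕ} (hk : 3 ≤ k) (ω : Om n) (b : Sym2 (Fin n) → Bool)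
    (hb : ∀ s ∈ Ybad k ω, b s = true) : ¬ (orientOf (graphOf ω) b).HasDirCycle k := by
  rintro ⟨c, hcinj, hcdir⟩
  have hwit : c ∈ witnessSet k ω := by
    rw [witnessSet, Finset.mem_filter]
    refine ⟨Finset.mem_filter.mpr ⟨Finset.mem_univ _, hcinj⟩, fun s hs => ?_⟩
    rw [cEdges, Finset.mem_image] at hs
    obtain ⟨i, -, rfl⟩ := hs
    have hd : (orientOf (graphOf ω) b).dir (c i) (c (succk i)) := hcdir i
    have hadj := (orientOf (graphOf ω) b).dir_adj hd
    exact ⟨fun hdg => hadj.1 (Sym2.mk_isDiag_iff.mp hdg), hadj.2⟩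
  have hforced : ∀ i : Fin k, c i < c (succk i) := by
    intro i
    have hd : (orientOf (graphOf ω) b).dir (c i) (c (succk i)) := hcdir i
    have hbt : b s(c i, c (succk i)) = true := by
      refine hb _ ?_
      rw [Ybad, Finset.mem_biUnion]
      exact ⟨c, hwit, Finset.mem_image.mpr ⟨i, Finset.mem_univ _, rfl⟩⟩
    rcases hd.2 with ⟨hlt, -⟩ | ⟨-, hbf⟩
    · exact hlt
    · rw [hbt] at hbf; exact absurd hbf (by simp)
  have hne : Nonempty (Fin k) := ⟨⟨0, by omega⟩⟩
  obtain ⟨i0, hmax⟩ := Finite.exists_max c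
  exact absurd (hmax (succk i0)) (not_le.mpr (hforced i0))

lemma le_countCkFree {k : ℕ} (hk : 3 ≤ k) (ω : Om n) :
    2 ^ ((edgesF ω).card - k * (witnessSet k ω).card) ≤ countCkFree k (graphOf ω) := by
  set EOut := edgesF ω \ Ybad k ω with hEOut
  have hcardY : (Ybad k ω).card ≤ k * (witnessSet k ω).card := by
    calc (Ybad k ω).card ≤ ∑ c ∈ witnessSet k ω, (cEdges k c).card := Finset.card_biUnion_le
      _ ≤ ∑ _c ∈ witnessSet k ω, k := by
          refine Finset.sum_le_sum fun c _ => ?_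
          calc (cEdges k c).card ≤ (univ : Finset (Fin k)).card := Finset.card_image_le
            _ = k := by rw [Finset.card_univ, Fintype.card_fin]
      _ = k * (witnessSet k ω).card := by rw [Finset.sum_const, smul_eq_mul, mul_comm]
  have hcardE : (edgesF ω).card - k * (witnessSet k ω).card ≤ EOut.card := by
    calc (edgesF ω).card - k * (witnessSet k ω).card
        ≤ (edgesF ω).card - (Ybad k ω).card := Nat.sub_le_sub_left hcardY _
      _ ≤ EOut.card := Finset.le_card_sdiff _ _
  refine le_trans (Nat.pow_le_pow_right (by norm_num) hcardE) ?_
  rw [countCkFree]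
  have hmap : ∀ g : ↥EOut → Bool,
      ¬ (orientOf (graphOf ω) (fun s => if h : s ∈ EOut then g ⟨s, h⟩ else true)).HasDirCycle k := by
    intro g
    refine orientOf_noCycle hk ω _ fun s hs => ?_
    have : s ∉ EOut := fun hmem => (Finset.mem_sdiff.mp hmem).2 hs
    rw [dif_neg this]
  have hinj : Function.Injective (fun g : ↥EOut → Bool =>
      (⟨orientOf (graphOf ω) (fun s => if h : s ∈ EOut then g ⟨s, h⟩ else true), hmap g⟩ :
        {D : GraphOrientation (graphOf ω) // ¬ D.HasDirCycle k})) := by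
    intro g g' h
    funext e
    obtain ⟨s, hs⟩ := e
    have hsE : s ∈ edgesF ω := (Finset.mem_sdiff.mp hs).1
    have hsnd : ¬ s.IsDiag := by
      have := (Finset.mem_filter.mp hsE).1
      rw [ND, Finset.mem_filter] at this
      exact this.2
    have hωs : ω s = true := (Finset.mem_filter.mp hsE).2
    obtain ⟨u, v, hlt, rfl⟩ := exists_lt_repr hsnd
    have hadj : (graphOf ω).Adj u v := ⟨hlt.ne, hωs⟩
    have hDD : (orientOf (graphOf ω) (fun s => if h : s ∈ EOut then g ⟨s, h⟩ else true)) =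
        (orientOf (graphOf ω) (fun s => if h : s ∈ EOut then g' ⟨s, h⟩ else true)) :=
      congrArg Subtype.val h
    have hd1 := orientOf_dir_iff (b := fun s => if h : s ∈ EOut then g ⟨s, h⟩ else true) hlt hadj
    have hd2 := orientOf_dir_iff (b := fun s => if h : s ∈ EOut then g' ⟨s, h⟩ else true) hlt hadj
    rw [hDD] at hd1
    have : (if h : s(u, v) ∈ EOut then g ⟨s(u, v), h⟩ else true)
        = (if h : s(u, v) ∈ EOut then g' ⟨s(u, v), h⟩ else true) := by
      have hiff := (hd1.symm.trans hd2)
      simp only [dif_pos hs] at hiff ⊢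
      cases hgb : g ⟨s(u, v), hs⟩ <;> cases hgb' : g' ⟨s(u, v), hs⟩ <;> simp_all
    rwa [dif_pos hs, dif_pos hs] at this
  calc 2 ^ EOut.card = Nat.card (↥EOut → Bool) := by
        rw [Nat.card_eq_fintype_card, Fintype.card_fun, Fintype.card_coe, Fintype.card_bool]
    _ ≤ Nat.card {D : GraphOrientation (graphOf ω) // ¬ D.HasDirCycle k} :=
        Nat.card_le_card_of_injective _ hinj

lemma countCkFree_pos {k : ℕ} (hk : 3 ≤ k) (ω : Om n) : 0 < countCkFree k (graphOf ω) := by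
  have := le_countCkFree hk ω
  exact lt_of_lt_of_le (Nat.pow_pos (by norm_num)) this

lemma logb_sandwich {k : ℕ} (hk : 3 ≤ k) (ω : Om n) :
    eR ω - (k : ℝ) * NR k ω ≤ Real.logb 2 (countCkFree k (graphOf ω)) ∧
      Real.logb 2 (countCkFree k (graphOf ω)) ≤ eR ω := by
  have hpos : (0:ℝ) < ((countCkFree k (graphOf ω) : ℕ) : ℝ) :=
    Nat.cast_pos.mpr (countCkFree_pos hk ω)
  have hub := countCkFree_le k ω
  have hlb := le_countCkFree hk ω
  have hlogpow : ∀ m : ℕ, Real.logb 2 ((2:ℝ) ^ m) = m := by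
    intro m
    rw [Real.logb_pow]
    simp [Real.logb_self_eq_one]
  constructor
  · have h1 : Real.logb 2 ((2:ℝ) ^ ((edgesF ω).card - k * (witnessSet k ω).card))
        ≤ Real.logb 2 ((countCkFree k (graphOf ω) : ℕ) : ℝ) := by
      refine Real.logb_le_logb_of_le (by norm_num) (by positivity) ?_
      calc ((2:ℝ) ^ ((edgesF ω).card - k * (witnessSet k ω).card))
          = (((2 ^ ((edgesF ω).card - k * (witnessSet k ω).card) : ℕ)) : ℝ) := by push_cast; ring
        _ ≤ _ := by exact_mod_cast hlb
    rw [hlogpow] at h1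
    refine le_trans ?_ h1
    rw [eR_eq, NR]
    by_cases hc : k * (witnessSet k ω).card ≤ (edgesF ω).card
    · rw [Nat.cast_sub hc]; push_cast; linarith
    · have h0 : (edgesF ω).card - k * (witnessSet k ω).card = 0 :=
        Nat.sub_eq_zero_of_le (le_of_not_ge hc)
      rw [h0]
      push_cast
      have : ((edgesF ω).card : ℝ) ≤ (k : ℝ) * ((witnessSet k ω).card : ℝ) := by
        exact_mod_cast le_of_not_ge hc
      linarith
  · have h2 : Real.logb 2 ((countCkFree k (graphOf ω) : ℕ) : ℝ)
        ≤ Real.logb 2 ((2:ℝ) ^ (edgesF ω).card) := by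
      refine Real.logb_le_logb_of_le (by norm_num) hpos ?_
      calc ((countCkFree k (graphOf ω) : ℕ) : ℝ) ≤ ((2 ^ (edgesF ω).card : ℕ) : ℝ) := by
            exact_mod_cast hub
        _ = (2:ℝ) ^ (edgesF ω).card := by push_cast; ring
    rw [hlogpow] at h2
    rw [eR_eq]
    exact h2

/-! ### Measure glue -/

lemma gnp_singleton {pr : ℝ} (h0 : 0 ≤ pr) (h1 : pr ≤ 1) (ω : Om n) :
    gnp n pr {ω} = ENNReal.ofReal (mw pr ω) := by
  have hset : ({ω} : Set (Om n)) = Set.univ.pi fun s => {ω s} := by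
    ext x
    simp [Set.mem_pi, funext_iff]
  have hb : ∀ b : Bool, bern pr {b} = ENNReal.ofReal (if b then pr else 1 - pr) := by
    intro b
    rw [bern]
    cases b <;>
      simp [Measure.dirac_apply' _ (MeasurableSet.singleton _), Set.indicator]
  rw [gnp, hset, Measure.pi_pi]
  rw [Finset.prod_congr rfl fun s _ => hb (ω s)]
  rw [mw, ENNReal.ofReal_prod_of_nonneg]
  intro s _
  split <;> linarith

lemma gnp_finset {pr : ℝ} (h0 : 0 ≤ pr) (h1 : pr ≤ 1) (A : Finset (Om n)) :
    gnp n pr ↑A = ENNReal.ofReal (∑ ω ∈ A, mw pr ω) := by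
  have hA : (↑A : Set (Om n)) = ⋃ ω ∈ A, {ω} := by
    ext x; simp
  rw [hA, measure_biUnion_finset ?_ fun b _ => MeasurableSet.singleton b]
  · rw [Finset.sum_congr rfl fun ω _ => gnp_singleton h0 h1 ω,
      ← ENNReal.ofReal_sum_of_nonneg fun ω _ => mw_nonneg h0 h1 ω]
  · intro x _ y _ hxy
    simp [Set.disjoint_singleton, hxy]

lemma gnp_toReal {pr : ℝ} (h0 : 0 ≤ pr) (h1 : pr ≤ 1) (A : Finset (Om n)) :
    (gnp n pr ↑A).toReal = ∑ ω ∈ A, mw pr ω := by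
  rw [gnp_finset h0 h1 A, ENNReal.toReal_ofReal]
  exact Finset.sum_nonneg fun ω _ => mw_nonneg h0 h1 ω

lemma set_eq_coe_finset (A : Set (Om n)) : A = ↑(univ.filter (· ∈ A)) := by
  ext ω; simp

lemma gnp_toReal_set {pr : ℝ} (h0 : 0 ≤ pr) (h1 : pr ≤ 1) (A : Set (Om n)) :
    (gnp n pr A).toReal = ∑ ω ∈ univ.filter (· ∈ A), mw pr ω := by
  conv_lhs => rw [set_eq_coe_finset A]
  exact gnp_toReal h0 h1 _

lemma sum_mw_le_sum_mw {P Q : Om n → Prop} {iP : DecidablePred P} {iQ : DecidablePred Q}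
    {pr : ℝ} (h0 : 0 ≤ pr) (h1 : pr ≤ 1) (h : ∀ ω, P ω → Q ω) :
    ∑ ω ∈ @Finset.filter _ P iP univ, mw pr ω ≤ ∑ ω ∈ @Finset.filter _ Q iQ univ, mw pr ω := by
  refine Finset.sum_le_sum_of_subset_of_nonneg ?_ fun ω _ _ => mw_nonneg h0 h1 ω
  intro ω hω
  rw [Finset.mem_filter] at hω ⊢
  exact ⟨hω.1, h ω hω.2⟩

lemma sum_mw_filter_le_one {Q : Om n → Prop} {iQ : DecidablePred Q}
    {pr : ℝ} (h0 : 0 ≤ pr) (h1 : pr ≤ 1) :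
    ∑ ω ∈ @Finset.filter _ Q iQ univ, mw pr ω ≤ 1 := by
  calc ∑ ω ∈ @Finset.filter _ Q iQ univ, mw pr ω ≤ ∑ ω : Om n, mw pr ω :=
        Finset.sum_le_sum_of_subset_of_nonneg (Finset.filter_subset _ _)
          fun ω _ _ => mw_nonneg h0 h1 ω
    _ = 1 := sum_mw

lemma cheb_event (pr : ℝ) (h0 : 0 ≤ pr) (h1 : pr ≤ 1) {t : ℝ} (ht : 0 < t) :
    ∑ ω ∈ univ.filter (fun ω : Om n => t ≤ (eR ω - ((ND n).card : ℝ) * pr) ^ 2), mw pr ω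
      ≤ (((ND n).card : ℝ) * pr) / t := by
  refine le_trans (markov pr h0 h1 (fun ω => (eR ω - ((ND n).card : ℝ) * pr) ^ 2)
    (fun ω => sq_nonneg _) ht) ?_
  exact div_le_div_of_nonneg_right' (var_bound pr h0 h1) ht

lemma markov_N (pr : ℝ) (h0 : 0 ≤ pr) (h1 : pr ≤ 1) {k : ℕ} (hk : 3 ≤ k) {t : ℝ}
    (ht : 0 < t) :
    ∑ ω ∈ univ.filter (fun ω : Om n => t ≤ (k : ℝ) * NR k ω), mw pr ω
      ≤ ((k : ℝ) * ((n : ℝ) ^ k * pr ^ k)) / t := by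
  refine le_trans (markov pr h0 h1 (fun ω => (k : ℝ) * NR k ω)
    (fun ω => mul_nonneg (Nat.cast_nonneg _) (Nat.cast_nonneg _)) ht) ?_
  refine div_le_div_of_nonneg_right' ?_ ht
  calc ∑ ω : Om n, mw pr ω * ((k : ℝ) * NR k ω)
      = (k : ℝ) * ∑ ω : Om n, mw pr ω * NR k ω := by
        rw [Finset.mul_sum]
        exact Finset.sum_congr rfl fun ω _ => by ring
    _ ≤ (k : ℝ) * ((n : ℝ) ^ k * pr ^ k) :=
        mul_le_mul_of_nonneg_left (exp_N pr h0 h1 hk) (Nat.cast_nonneg _)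

end St16

end AuxSt16

set_option maxHeartbeats 2000000 in
/-- For `k ≥ 3` and `n^{-2} ≪ p ≪ n^{-1+1/(k-1)}`, with high
probability `log₂ D(G(n,p), C↻ₖ) = (1+o(1)) p C(n,2)`. -/
theorem log_count_sparse_regime
    (k : ℕ) (hk : 3 ≤ k) (p : ℕ → ℝ) (hp : ∀ n, 0 ≤ p n ∧ p n ≤ 1)
    (hlower : Tendsto (fun n : ℕ => p n * (n : ℝ) ^ 2) atTop atTop)
    (hupper : Tendsto (fun n : ℕ => p n / (n : ℝ) ^ (-1 + 1 / ((k : ℝ) - 1))) atTop (nhds 0)) :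
    ∀ ε : ℝ, 0 < ε →
      Tendsto (fun n : ℕ =>
        (gnp n (p n) {ω |
          (1 - ε) * (p n * (n.choose 2 : ℝ)) ≤
              Real.logb 2 (countCkFree k (graphOf ω)) ∧
          Real.logb 2 (countCkFree k (graphOf ω)) ≤
              (1 + ε) * (p n * (n.choose 2 : ℝ))}).toReal)
        atTop (nhds 1) := by
  classical
  intro ε hε
  set K : ℕ := k - 1 with hKdef
  have hk3 : (3 : ℝ) ≤ (k : ℝ) := by exact_mod_cast hk
  have hKcast : (K : ℝ) = (k : ℝ) - 1 := by
    rw [hKdef, Nat.cast_sub (by omega)]; norm_num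
  set q : ℕ → ℝ := fun n => p n / (n : ℝ) ^ (-1 + 1 / ((k : ℝ) - 1)) with hqdef
  set L : ℕ → ℝ := fun n => p n * (n.choose 2 : ℝ) with hLdef
  set B1 : ℕ → ℝ := fun n => 4 / (ε ^ 2 * L n) with hB1def
  set B2 : ℕ → ℝ := fun n => (8 * (k : ℝ) / ε) * q n ^ K with hB2def
  have hchoose : ∀ n : ℕ, 2 ≤ n → ((n : ℝ) ^ 2) / 4 ≤ (n.choose 2 : ℝ) := by
    intro n hn
    rw [Nat.cast_choose_two]
    have h2 : (2 : ℝ) ≤ (n : ℝ) := by exact_mod_cast hn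
    nlinarith
  have hppos : ∀ᶠ n in atTop, 0 < p n := by
    filter_upwards [hlower.eventually_ge_atTop 1] with n hn
    by_contra hcon
    push_neg at hcon
    nlinarith [mul_nonneg (neg_nonneg.mpr hcon) (sq_nonneg (n : ℝ))]
  have hLtop : Tendsto L atTop atTop := by
    have hquarter : Tendsto (fun n : ℕ => p n * (n : ℝ) ^ 2 / 4) atTop atTop :=
      hlower.atTop_div_const (by norm_num)
    refine tendsto_atTop_mono' atTop ?_ hquarter
    filter_upwards [eventually_ge_atTop 2, hppos] with n hn hp0
    show p n * (n : ℝ) ^ 2 / 4 ≤ p n * (n.choose 2 : ℝ)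
    calc p n * (n : ℝ) ^ 2 / 4 = p n * ((n : ℝ) ^ 2 / 4) := by ring
      _ ≤ p n * (n.choose 2 : ℝ) :=
        mul_le_mul_of_nonneg_left (hchoose n hn) hp0.le
  have hLpos : ∀ᶠ n in atTop, 0 < L n := hLtop.eventually_gt_atTop 0
  have hB1to : Tendsto B1 atTop (nhds 0) := by
    have h1 : Tendsto (fun n => ε ^ 2 * L n) atTop atTop :=
      hLtop.const_mul_atTop (by positivity)
    have h3 := h1.inv_tendsto_atTop.const_mul (4 : ℝ)
    rw [mul_zero] at h3
    refine h3.congr fun n => ?_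
    show 4 * (ε ^ 2 * L n)⁻¹ = B1 n
    rw [show B1 n = 4 / (ε ^ 2 * L n) from rfl, div_eq_mul_inv]
  have hq0 : Tendsto (fun n => q n ^ K) atTop (nhds 0) := by
    have h := hupper.pow K
    rwa [zero_pow (by omega : K ≠ 0)] at h
  have hB2to : Tendsto B2 atTop (nhds 0) := by
    have h3 := hq0.const_mul (8 * (k : ℝ) / ε)
    rw [mul_zero] at h3
    exact h3
  have hBto : Tendsto (fun n => 1 - (B1 n + B2 n)) atTop (nhds 1) := by
    have h := (hB1to.add hB2to).const_sub (1 : ℝ)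
    rw [add_zero, sub_zero] at h
    exact h
  refine tendsto_of_tendsto_of_tendsto_of_le_of_le' hBto tendsto_const_nhds ?_ ?_
  · -- lower bound, eventually
    filter_upwards [hLpos, hppos, eventually_ge_atTop 2] with n hL0 hp0 hn2
    obtain ⟨h0, h1⟩ := hp n
    have hεL : 0 < ε * L n / 2 := by positivity
    have hMrL : ((St16.ND n).card : ℝ) * p n = L n := by
      rw [St16.card_ND]
      show (n.choose 2 : ℝ) * p n = p n * (n.choose 2 : ℝ)
      ring
    have hL4 : p n * (n : ℝ) ^ 2 ≤ 4 * L n := by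
      have h := mul_le_mul_of_nonneg_left (hchoose n hn2) hp0.le
      have hLn : L n = p n * (n.choose 2 : ℝ) := rfl
      nlinarith
    -- the two bad-event bounds
    have hPS1 : ∑ ω ∈ Finset.univ.filter
        (fun ω : St16.Om n => (ε * L n / 2) ^ 2 ≤ (St16.eR ω - ((St16.ND n).card : ℝ) * p n) ^ 2),
          St16.mw (p n) ω ≤ B1 n := by
      refine le_trans (St16.cheb_event (p n) h0 h1 (by positivity)) ?_
      rw [hMrL]
      rw [show B1 n = 4 / (ε ^ 2 * L n) from rfl]
      rw [div_le_div_iff₀ (by positivity) (by positivity)]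
      ring_nf
      nlinarith [sq_nonneg (ε * L n), hL0, hε]
    have hPS2 : ∑ ω ∈ Finset.univ.filter
        (fun ω : St16.Om n => ε * L n / 2 ≤ (k : ℝ) * St16.NR k ω),
          St16.mw (p n) ω ≤ B2 n := by
      refine le_trans (St16.markov_N (p n) h0 h1 hk hεL) ?_
      have hn0 : (0 : ℝ) < (n : ℝ) := by
        have : (2 : ℝ) ≤ (n : ℝ) := by exact_mod_cast hn2
        linarith
      have hkne : (k : ℝ) - 1 ≠ 0 := by linarith
      have hq : q n ^ K = p n ^ K * (n : ℝ) ^ (k - 2 : ℕ) := by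
        have hT : (((n : ℝ) ^ (-1 + 1 / ((k : ℝ) - 1)))⁻¹) ^ K = (n : ℝ) ^ (k - 2 : ℕ) := by
          rw [← Real.rpow_neg hn0.le,
            ← Real.rpow_natCast ((n : ℝ) ^ (-(-1 + 1 / ((k : ℝ) - 1)))) K,
            ← Real.rpow_mul hn0.le,
            show (-(-1 + 1 / ((k : ℝ) - 1)) * (K : ℝ)) = ((k - 2 : ℕ) : ℝ) from ?_,
            Real.rpow_natCast]
          rw [hKcast, Nat.cast_sub (by omega)]
          push_cast
          field_simp
          ring
        calc q n ^ K = (p n * ((n : ℝ) ^ (-1 + 1 / ((k : ℝ) - 1)))⁻¹) ^ K := by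
              rw [show q n = p n / (n : ℝ) ^ (-1 + 1 / ((k : ℝ) - 1)) from rfl, div_eq_mul_inv]
          _ = p n ^ K * (((n : ℝ) ^ (-1 + 1 / ((k : ℝ) - 1)))⁻¹) ^ K := mul_pow _ _ _
          _ = p n ^ K * (n : ℝ) ^ (k - 2 : ℕ) := by rw [hT]
      have hnk : (n : ℝ) ^ k = (n : ℝ) ^ (k - 2 : ℕ) * (n : ℝ) ^ 2 := by
        rw [← pow_add]; congr 1; omega
      have hpk : p n ^ k = p n ^ K * p n := by
        rw [← pow_succ]; congr 1; omega
      rw [div_le_iff₀ hεL, show B2 n = (8 * (k : ℝ) / ε) * q n ^ K from rfl, hq, hnk, hpk]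
      have hfac : (0 : ℝ) ≤ (k : ℝ) * (p n ^ K * (n : ℝ) ^ (k - 2 : ℕ)) := by positivity
      have hmul := mul_le_mul_of_nonneg_left hL4 hfac
      have hεne : ε ≠ 0 := ne_of_gt hε
      have hRHS : 8 * (k : ℝ) / ε * (p n ^ K * (n : ℝ) ^ (k - 2 : ℕ)) * (ε * L n / 2)
          = 4 * ((k : ℝ) * (p n ^ K * (n : ℝ) ^ (k - 2 : ℕ))) * L n := by
        field_simp
        ring
      rw [hRHS]
      nlinarith [hmul]
    -- rewrite the measure as a sum
    rw [St16.gnp_toReal_set h0 h1]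
    set bad1 := Finset.univ.filter
        (fun ω : St16.Om n =>
          (ε * L n / 2) ^ 2 ≤ (St16.eR ω - ((St16.ND n).card : ℝ) * p n) ^ 2) with hbad1
    set bad2 := Finset.univ.filter
        (fun ω : St16.Om n => ε * L n / 2 ≤ (k : ℝ) * St16.NR k ω) with hbad2
    have hnn : ∀ ω : St16.Om n, 0 ≤ St16.mw (p n) ω := St16.mw_nonneg h0 h1
    have hrest : ∑ ω ∈ Finset.univ.filter
        (fun ω : St16.Om n => ¬(ω ∉ bad1 ∧ ω ∉ bad2)), St16.mw (p n) ω ≤ B1 n + B2 n := by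
      have hsubr : Finset.univ.filter (fun ω : St16.Om n => ¬(ω ∉ bad1 ∧ ω ∉ bad2))
          ⊆ bad1 ∪ bad2 := by
        intro ω hω
        rw [Finset.mem_filter] at hω
        rw [Finset.mem_union]
        by_contra hc
        push_neg at hc
        exact hω.2 ⟨hc.1, hc.2⟩
      calc ∑ ω ∈ Finset.univ.filter
            (fun ω : St16.Om n => ¬(ω ∉ bad1 ∧ ω ∉ bad2)), St16.mw (p n) ω
          ≤ ∑ ω ∈ bad1 ∪ bad2, St16.mw (p n) ω :=
            Finset.sum_le_sum_of_subset_of_nonneg hsubr fun ω _ _ => hnn ω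
        _ ≤ (∑ ω ∈ bad1, St16.mw (p n) ω) + ∑ ω ∈ bad2, St16.mw (p n) ω := by
            have hui := Finset.sum_union_inter (s₁ := bad1) (s₂ := bad2) (f := St16.mw (p n))
            have hnn2 : 0 ≤ ∑ ω ∈ bad1 ∩ bad2, St16.mw (p n) ω :=
              Finset.sum_nonneg fun ω _ => hnn ω
            linarith
        _ ≤ B1 n + B2 n := add_le_add hPS1 hPS2
    have hpart := Finset.sum_filter_add_sum_filter_not Finset.univ
      (fun ω : St16.Om n => ω ∉ bad1 ∧ ω ∉ bad2) (St16.mw (p n))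
    have hone : ∑ ω : St16.Om n, St16.mw (p n) ω = 1 := St16.sum_mw
    have hgood : 1 - (B1 n + B2 n) ≤ ∑ ω ∈ Finset.univ.filter
        (fun ω : St16.Om n => ω ∉ bad1 ∧ ω ∉ bad2), St16.mw (p n) ω := by
      rw [hone] at hpart
      linarith
    refine le_trans hgood (St16.sum_mw_le_sum_mw h0 h1 ?_)
    intro ω hω
    obtain ⟨hb1, hb2⟩ := hω
    rw [hbad1] at hb1
    rw [hbad2] at hb2
    simp only [Finset.mem_filter, Finset.mem_univ, true_and, not_le] at hb1 hb2
    rw [hMrL] at hb1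
    have habs1 : St16.eR ω - L n < ε * L n / 2 := by nlinarith
    have habs2 : -(ε * L n / 2) < St16.eR ω - L n := by nlinarith
    obtain ⟨hlo, hhi⟩ := St16.logb_sandwich hk ω
    have hLn : p n * (n.choose 2 : ℝ) = L n := rfl
    have hc1 : (1 - ε) * (p n * (n.choose 2 : ℝ)) ≤ Real.logb 2 (countCkFree k (graphOf ω)) := by
      rw [hLn]
      calc (1 - ε) * L n ≤ St16.eR ω - (k : ℝ) * St16.NR k ω := by nlinarith
        _ ≤ _ := hlo
    have hc2 : Real.logb 2 (countCkFree k (graphOf ω)) ≤ (1 + ε) * (p n * (n.choose 2 : ℝ)) := by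
      rw [hLn]
      calc Real.logb 2 (countCkFree k (graphOf ω)) ≤ St16.eR ω := hhi
        _ ≤ (1 + ε) * L n := by nlinarith
    exact ⟨hc1, hc2⟩
  · -- upper bound ≤ 1, always
    refine Eventually.of_forall fun n => ?_
    obtain ⟨h0, h1⟩ := hp n
    rw [St16.gnp_toReal_set h0 h1]
    exact St16.sum_mw_filter_le_one h0 h1
end
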